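/- arXiv:2205.07435 — 11 statements merged into one kernel-verified Lean document; each statement's English description precedes it below -/
import Mathlib

section
/- Let X be a Banach space, let v : (0,∞) → X be strongly measurable and Bochner integrable on every compact subset of (0,∞), and let N ⊂ (0,∞) be a set of Lebesgue measure zero. Then for every ε > 0 there exist sequences (t_k)_{k∈ℕ} in (0,∞) \ N and (r_k)_{k∈ℕ} of positive reals with r_k < t_k, such that: the closed intervals I_k = [t_k − r_k, t_k + r_k] are pairwise disjoint; each t_k is a Lebesgue point of v, i.e. lim_{h→0⁺} (1/(2h)) ∫_{t_k−h}^{t_k+h} ‖v(s) − v(t_k)‖ ds = 0; the set (0,∞) \ ⋃_{k∈ℕ} I_k has Lebesgue measure zero; and ∫_0^∞ ‖v(t) − v^ε(t)‖ dt ≤ ε, where v^ε(t) = v(t_k) for t ∈ I_k and v^ε(t) = 0 for t ∉ ⋃_{k∈ℕ} I_k. -/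
/-!
Almost every point of `(0, ∞) \ N` is a Lebesgue point of `v`, and at such a point `x` all small
radii `r < x` satisfy `∫_{[x-r, x+r]} ‖v s - v x‖ ds ≤ (ε/π) (1 + (2x)²)⁻¹ · 2r`. Besicovitch's
covering theorem selects disjoint intervals of this kind covering almost all of `(0, ∞)`; there are
infinitely many of them because `(0, ∞)` has infinite measure, so they can be indexed by `ℕ`. On
`[x-r, x+r] ⊆ [0, 2x]` the weight `(1 + (2x)²)⁻¹` is at most `(1 + s²)⁻¹`, so summing over the
intervals bounds `∫ ‖v - vε‖` by `∫_ℝ (ε/π) (1 + s²)⁻¹ ds = ε`.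
-/

open MeasureTheory Set Filter Metric Topology Function

def IsLebesguePoint {E : Type*} [NormedAddCommGroup E] (v : ℝ → E) (x : ℝ) : Prop :=
  Tendsto (fun h : ℝ => (1 / (2 * h)) * ∫ s in Icc (x - h) (x + h), ‖v s - v x‖) (𝓝[>] 0) (𝓝 0)

namespace IsLebesguePoint

variable {E : Type*} [NormedAddCommGroup E] {v w : ℝ → E} {x : ℝ}

theorem congr (hv : IsLebesguePoint v x) (hvw : v =ᶠ[𝓝 x] w) : IsLebesguePoint w x := by
  obtain ⟨ε, hε, hvw⟩ := Metric.eventually_nhds_iff_ball.1 hvw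
  refine hv.congr' ?_
  filter_upwards [Ioo_mem_nhdsGT hε] with h hh
  have hsub : Icc (x - h) (x + h) ⊆ ball x ε := by
    rw [← Real.closedBall_eq_Icc]; exact closedBall_subset_ball hh.2
  rw [setIntegral_congr_fun measurableSet_Icc fun s hs => by
    rw [hvw s (hsub hs), hvw x (mem_ball_self hε)]]

theorem eventually_lintegral_le (hv : IsLebesguePoint v x) (hint : IntegrableAtFilter v (𝓝 x))
    {c : ℝ} (hc : 0 < c) :
    ∀ᶠ h in 𝓝[>] 0, ∫⁻ s in Icc (x - h) (x + h), ‖v s - v x‖ₑ ≤ ENNReal.ofReal (c * (2 * h)) := by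
  obtain ⟨U, hU, hvU⟩ := hint
  obtain ⟨ε, hε, hball⟩ := Metric.mem_nhds_iff.1 hU
  filter_upwards [hv.eventually (gt_mem_nhds hc), Ioo_mem_nhdsGT hε] with h hlt hh
  have hsub : Icc (x - h) (x + h) ⊆ U := by
    rw [← Real.closedBall_eq_Icc]; exact (closedBall_subset_ball hh.2).trans hball
  have hvIcc : IntegrableOn (fun s => v s - v x) (Icc (x - h) (x + h)) :=
    (hvU.mono_set hsub).sub (integrableOn_const (by simp [Real.volume_Icc]))
  rw [← ofReal_integral_norm_eq_lintegral_enorm hvIcc]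
  refine ENNReal.ofReal_le_ofReal ?_
  have h2 : 0 < 2 * h := by linarith [hh.1]
  rw [one_div, inv_mul_lt_iff₀ h2] at hlt
  linarith

end IsLebesguePoint

theorem ae_isLebesguePoint {E : Type*} [NormedAddCommGroup E] {v : ℝ → E}
    (hv : LocallyIntegrable v) : ∀ᵐ x, IsLebesguePoint v x := by
  filter_upwards [(Besicovitch.vitaliFamily volume).ae_tendsto_average_norm_sub hv] with x hx
  refine (hx.comp (Besicovitch.tendsto_filterAt volume x)).congr' ?_
  filter_upwards [self_mem_nhdsWithin] with h (hh : 0 < h)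
  rw [Function.comp_apply, setAverage_eq, Real.closedBall_eq_Icc,
    Real.volume_real_Icc_of_le (by linarith), smul_eq_mul, one_div]
  ring_nf

theorem ae_isLebesguePoint_of_locallyIntegrableOn {E : Type*} [NormedAddCommGroup E]
    {v : ℝ → E} {U : Set ℝ} (hU : IsOpen U) (hv : LocallyIntegrableOn v U) :
    ∀ᵐ x, x ∈ U → IsLebesguePoint v x := by
  obtain ⟨u, hu, hUu, hvu⟩ := hv.exists_nat_integrableOn
  have hind : ∀ n, ∀ᵐ x, IsLebesguePoint ((u n ∩ U).indicator v) x := fun n =>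
    ae_isLebesguePoint ((integrable_indicator_iff ((hu n).inter hU).measurableSet).2
      (hvu n)).locallyIntegrable
  filter_upwards [ae_all_iff.2 hind] with x hx hxU
  obtain ⟨n, hxn⟩ := mem_iUnion.1 (hUu hxU)
  refine (hx n).congr ?_
  filter_upwards [((hu n).inter hU).mem_nhds ⟨hxn, hxU⟩] with y hy
  exact indicator_of_mem hy v

theorem Besicovitch.exists_seq_disjoint_closedBall_covering_ae {α : Type*} [MetricSpace α]
    [SecondCountableTopology α] [MeasurableSpace α] [OpensMeasurableSpace α]
    [HasBesicovitchCovering α] [ProperSpace α] (μ : Measure α) [SFinite μ]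
    [IsFiniteMeasureOnCompacts μ] (f : α → Set ℝ) (s : Set α)
    (hf : ∀ x ∈ s, ∀ δ > 0, (f x ∩ Ioo 0 δ).Nonempty) (hs : μ s = ⊤) :
    ∃ (t : ℕ → α) (r : ℕ → ℝ), (∀ k, t k ∈ s) ∧ (∀ k, r k ∈ f (t k)) ∧
      Pairwise (Disjoint on fun k => closedBall (t k) (r k)) ∧
      μ (s \ ⋃ k, closedBall (t k) (r k)) = 0 := by
  obtain ⟨T, r, hTc, hTs, hTf, hTcov, hTdisj⟩ :=
    exists_disjoint_closedBall_covering_ae μ f s hf (fun _ => 1) fun _ _ => one_pos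
  have hTinf : T.Infinite := by
    intro hTfin
    have hfin : μ (⋃ x ∈ T, closedBall x (r x)) ≠ ⊤ :=
      (measure_biUnion_lt_top hTfin fun x _ => measure_closedBall_lt_top).ne
    exact hfin (top_le_iff.1 (hs ▸ measure_mono_ae (ae_le_set.2 hTcov)))
  have : Denumerable T := (countable_infinite_iff_nonempty_denumerable.1 ⟨hTc, hTinf⟩).some
  let e : ℕ ≃ T := (Denumerable.eqv T).symm
  refine ⟨fun k => e k, fun k => r (e k), fun k => hTs (e k).2, fun k => (hTf _ (e k).2).1,
    fun i j hij => hTdisj (e i).2 (e j).2 fun h => hij (e.injective (Subtype.ext h)), ?_⟩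
  have hunion : (⋃ k, closedBall (e k : α) (r (e k))) = ⋃ x ∈ T, closedBall x (r x) := by
    rw [biUnion_eq_iUnion]
    exact e.surjective.iUnion_comp fun x : T => closedBall (x : α) (r x)
  rw [hunion, hTcov]

theorem lintegral_le_lintegral_of_setLIntegral_le {α : Type*} [MeasurableSpace α]
    {μ : Measure α} {s : Set α} {I : ℕ → Set α} (hI : ∀ k, MeasurableSet (I k))
    (hdisj : Pairwise (Disjoint on I)) (hcov : μ (s \ ⋃ k, I k) = 0) {f g : α → ENNReal}
    (hfg : ∀ k, ∫⁻ x in I k, f x ∂μ ≤ ∫⁻ x in I k, g x ∂μ) :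
    ∫⁻ x in s, f x ∂μ ≤ ∫⁻ x, g x ∂μ :=
  calc ∫⁻ x in s, f x ∂μ ≤ ∫⁻ x in ⋃ k, I k, f x ∂μ := lintegral_mono_set' (ae_le_set.2 hcov)
    _ = ∑' k, ∫⁻ x in I k, f x ∂μ := lintegral_iUnion hI hdisj f
    _ ≤ ∑' k, ∫⁻ x in I k, g x ∂μ := ENNReal.tsum_le_tsum hfg
    _ = ∫⁻ x in ⋃ k, I k, g x ∂μ := (lintegral_iUnion hI hdisj g).symm
    _ ≤ ∫⁻ x, g x ∂μ := setLIntegral_le_lintegral _ _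

theorem lintegral_ofReal_mul_inv_one_add_sq {c : ℝ} (hc : 0 ≤ c) :
    ∫⁻ x : ℝ, ENNReal.ofReal (c * (1 + x ^ 2)⁻¹) = ENNReal.ofReal (c * Real.pi) := by
  rw [← ofReal_integral_eq_lintegral_ofReal (integrable_inv_one_add_sq.const_mul c)
    (ae_of_all _ fun x => by positivity), integral_const_mul, integral_univ_inv_one_add_sq]

theorem ofReal_le_setLIntegral_inv_one_add_sq {c x r : ℝ} (hc : 0 ≤ c) (hr : r ≤ x) :
    ENNReal.ofReal (c * (1 + (2 * x) ^ 2)⁻¹ * (2 * r)) ≤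
      ∫⁻ s in Icc (x - r) (x + r), ENNReal.ofReal (c * (1 + s ^ 2)⁻¹) := by
  have hvol : volume (Icc (x - r) (x + r)) = ENNReal.ofReal (2 * r) := by
    rw [Real.volume_Icc]; ring_nf
  rw [ENNReal.ofReal_mul (by positivity), ← hvol, ← setLIntegral_const]
  refine setLIntegral_mono' measurableSet_Icc fun s hs => ENNReal.ofReal_le_ofReal ?_
  have hs0 : 0 ≤ s := by linarith [hs.1]
  gcongr
  linarith [hs.2]

theorem stmt_1_general (X : Type*) [NormedAddCommGroup X]
    (v : ℝ → X)
    (hv : ∀ K : Set ℝ, K ⊆ Ioi 0 → IsCompact K → IntegrableOn v K volume)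
    (N : Set ℝ) (hNnull : volume N = 0) :
    ∀ ε : ℝ, 0 < ε →
      ∃ t r : ℕ → ℝ,
        (∀ k, t k ∈ Ioi 0 \ N) ∧
        (∀ k, 0 < r k ∧ r k < t k) ∧
        (∀ i j, i ≠ j →
          Disjoint (Icc (t i - r i) (t i + r i)) (Icc (t j - r j) (t j + r j))) ∧
        (∀ k, Tendsto
          (fun h : ℝ => (1 / (2 * h)) * ∫ s in Icc (t k - h) (t k + h), ‖v s - v (t k)‖)
          (nhdsWithin 0 (Ioi 0)) (nhds 0)) ∧
        volume (Ioi 0 \ ⋃ k, Icc (t k - r k) (t k + r k)) = 0 ∧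
        ∀ vε : ℝ → X,
          (∀ k, ∀ s ∈ Icc (t k - r k) (t k + r k), vε s = v (t k)) →
          (∀ s ∈ Ioi 0 \ ⋃ k, Icc (t k - r k) (t k + r k), vε s = 0) →
          (∫⁻ s in Ioi (0 : ℝ), (‖v s - vε s‖₊ : ENNReal) ∂volume) ≤ ENNReal.ofReal ε := by
  intro ε hε
  have hloc : LocallyIntegrableOn v (Ioi 0) :=
    (locallyIntegrableOn_iff isOpen_Ioi.isLocallyClosed).2 hv
  set c := ε / Real.pi
  have hc : 0 < c := div_pos hε Real.pi_pos
  let S := {x | x ∈ Ioi 0 \ N ∧ IsLebesguePoint v x}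
  have hS : Ioi 0 ≤ᵐ[volume] S := by
    filter_upwards [ae_isLebesguePoint_of_locallyIntegrableOn isOpen_Ioi hloc,
      measure_eq_zero_iff_ae_notMem.1 hNnull] with x hxL hxN hx0 using ⟨⟨hx0, hxN⟩, hxL hx0⟩
  let f x := {r | 0 < r ∧ r < x ∧ ∫⁻ s in Icc (x - r) (x + r), ‖v s - v x‖ₑ ≤
    ENNReal.ofReal (c * (1 + (2 * x) ^ 2)⁻¹ * (2 * r))}
  have hf : ∀ x ∈ S, ∀ δ > 0, (f x ∩ Ioo 0 δ).Nonempty := by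
    rintro x ⟨⟨hx0, -⟩, hxL⟩ δ hδ
    have hint : IntegrableAtFilter v (𝓝 x) := by
      simpa only [nhdsWithin_eq_nhds.2 (Ioi_mem_nhds (mem_Ioi.1 hx0))] using hloc x hx0
    obtain ⟨r, hrv, hr⟩ := ((hxL.eventually_lintegral_le hint (c := c * (1 + (2 * x) ^ 2)⁻¹)
      (by positivity)).and (Ioo_mem_nhdsGT (lt_min hx0 hδ))).exists
    exact ⟨r, ⟨hr.1, hr.2.trans_le (min_le_left _ _), hrv⟩, hr.1, hr.2.trans_le (min_le_right _ _)⟩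
  obtain ⟨t, r, htS, hrf, hdisj, hcov⟩ := Besicovitch.exists_seq_disjoint_closedBall_covering_ae
    volume f S hf (top_le_iff.1 (Real.volume_Ioi ▸ measure_mono_ae hS))
  simp only [Real.closedBall_eq_Icc] at hdisj hcov
  have hcov' : volume (Ioi 0 \ ⋃ k, Icc (t k - r k) (t k + r k)) = 0 :=
    measure_mono_null (sdiff_triangle _ S _) (measure_union_null (ae_le_set.1 hS) hcov)
  refine ⟨t, r, fun k => (htS k).1, fun k => ⟨(hrf k).1, (hrf k).2.1⟩, fun i j hij => hdisj hij,
    fun k => (htS k).2, hcov', fun vε hvε _ => ?_⟩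
  calc ∫⁻ s in Ioi 0, (‖v s - vε s‖₊ : ENNReal)
      ≤ ∫⁻ s, ENNReal.ofReal (c * (1 + s ^ 2)⁻¹) :=
        lintegral_le_lintegral_of_setLIntegral_le (fun _ => measurableSet_Icc) hdisj hcov' fun k =>
          calc ∫⁻ s in Icc (t k - r k) (t k + r k), (‖v s - vε s‖₊ : ENNReal)
              = ∫⁻ s in Icc (t k - r k) (t k + r k), ‖v s - v (t k)‖ₑ :=
                setLIntegral_congr_fun measurableSet_Icc fun s hs => by rw [hvε k s hs]; rfl
            _ ≤ _ := (hrf k).2.2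
            _ ≤ _ := ofReal_le_setLIntegral_inv_one_add_sq hc.le (hrf k).2.1.le
    _ = ENNReal.ofReal ε := by
      rw [lintegral_ofReal_mul_inv_one_add_sq hc.le, div_mul_cancel₀ _ Real.pi_ne_zero]

/-- Covering lemma at Lebesgue points for a locally Bochner-integrable function
`v : (0,∞) → X` with values in a Banach space. -/
theorem stmt_1 (X : Type*) [NormedAddCommGroup X] [NormedSpace ℝ X] [CompleteSpace X]
    (v : ℝ → X)
    (hvmeas : AEStronglyMeasurable v (volume.restrict (Ioi (0 : ℝ))))
    (hv : ∀ K : Set ℝ, K ⊆ Ioi 0 → IsCompact K → IntegrableOn v K volume)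
    (N : Set ℝ) (hN : N ⊆ Ioi 0) (hNnull : volume N = 0) :
    ∀ ε : ℝ, 0 < ε →
      ∃ t r : ℕ → ℝ,
        (∀ k, t k ∈ Ioi 0 \ N) ∧
        (∀ k, 0 < r k ∧ r k < t k) ∧
        (∀ i j, i ≠ j →
          Disjoint (Icc (t i - r i) (t i + r i)) (Icc (t j - r j) (t j + r j))) ∧
        (∀ k, Tendsto
          (fun h : ℝ => (1 / (2 * h)) * ∫ s in Icc (t k - h) (t k + h), ‖v s - v (t k)‖)
          (nhdsWithin 0 (Ioi 0)) (nhds 0)) ∧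
        volume (Ioi 0 \ ⋃ k, Icc (t k - r k) (t k + r k)) = 0 ∧
        ∀ vε : ℝ → X,
          (∀ k, ∀ s ∈ Icc (t k - r k) (t k + r k), vε s = v (t k)) →
          (∀ s ∈ Ioi 0 \ ⋃ k, Icc (t k - r k) (t k + r k), vε s = 0) →
          (∫⁻ s in Ioi (0 : ℝ), (‖v s - vε s‖₊ : ENNReal) ∂volume) ≤ ENNReal.ofReal ε :=
  stmt_1_general X v hv N hNnull
end

section
/- Let n ≥ 1 be an integer with n ≠ 2 and let λ ∈ ℝ, and set c₀ = −λ/(2n(n+2)). Then: (i) for all c₁, c₂, c₃ ∈ ℝ, the function z(r) = c₀ r³ + c₁ r^{3−n} + c₂ r + c₃ r^{1−n} satisfies (L_n z)(r) = λ for all r > 0; (ii) conversely, if 0 < α < β and z : (α, β) → ℝ is three times continuously differentiable with (L_n z)(r) = λ for all r ∈ (α, β), then there exist c₁, c₂, c₃ ∈ ℝ such that z(r) = c₀ r³ + c₁ r^{3−n} + c₂ r + c₃ r^{1−n} for all r ∈ (α, β). -/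
/-!
Writing `D_k f = (r^k f)'`, the operator factors as `L_n = -r^{1-n} D_{n-1} D_{1-n} D_{n-1}`.
On finite sums of powers it acts termwise, `L_n r^m = -(n+m-1)(m-1)(n+m-3) r^{m-3}`: the roots
`m = 1-n, 1, 3-n` give the homogeneous solutions and `m = 3` the particular one.
Conversely, on an interval avoiding `0`, an equation `D_k f = ∑ cᵢ r^{mᵢ}` with all
`mᵢ ≠ -1` integrates to `f = K r^{-k} + ∑ cᵢ/(mᵢ+1) r^{mᵢ+1-k}`. Starting from
`D_{n-1} D_{1-n} D_{n-1} z = -λ r^{n-1}`, three such integrations exhibit `z`; since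
`n ∉ {0, 2}`, no exponent met on the way equals `-1`, so no logarithms appear.
-/

/-- The radial operator
`(L_n z)(r) = −r^{1−n} (r^{n−1} (r^{1−n} (r^{n−1} z)′)′)′`. -/
noncomputable def Lrad (n : ℕ) (z : ℝ → ℝ) (r : ℝ) : ℝ :=
  -(r ^ ((1 : ℤ) - (n : ℤ))) *
    deriv (fun s : ℝ => s ^ ((n : ℤ) - 1) *
      deriv (fun u : ℝ => u ^ ((1 : ℤ) - (n : ℤ)) *
        deriv (fun w : ℝ => w ^ ((n : ℤ) - 1) * z w) u) s) r

open Set Matrix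

theorem contDiffOn_zpow {𝕜 : Type*} [NontriviallyNormedField 𝕜] [CompleteSpace 𝕜]
    {k : WithTop ℕ∞} (m : ℤ) {s : Set 𝕜} (hs : (0 : 𝕜) ∉ s) :
    ContDiffOn 𝕜 k (fun x : 𝕜 => x ^ m) s := by
  rcases m with q | q
  · simpa using (contDiff_id.pow q).contDiffOn
  · simp only [zpow_negSucc]
    exact (contDiff_id.pow (q + 1)).contDiffOn.inv
      fun x hx => pow_ne_zero _ (ne_of_mem_of_not_mem hx hs)

noncomputable def weightedDeriv (k : ℤ) (f : ℝ → ℝ) : ℝ → ℝ :=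
  deriv fun s => s ^ k * f s

theorem Lrad_eq_weightedDeriv (n : ℕ) (z : ℝ → ℝ) (r : ℝ) :
    Lrad n z r = -(r ^ (1 - (n : ℤ))) *
      weightedDeriv (n - 1) (weightedDeriv (1 - n) (weightedDeriv (n - 1) z)) r :=
  rfl

theorem contDiffOn_weightedDeriv {l : ℕ} {f : ℝ → ℝ} {I : Set ℝ}
    (hf : ContDiffOn ℝ (l + 1) f I) (hI : IsOpen I) (hI0 : (0 : ℝ) ∉ I) (k : ℤ) :
    ContDiffOn ℝ l (weightedDeriv k f) I :=
  ((contDiffOn_zpow k hI0).mul hf).deriv_of_isOpen hI le_rfl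

section SumZpow

variable {ι : Type*} [Fintype ι] (c : ι → ℝ) (m : ι → ℤ)

theorem hasDerivAt_sum_zpow {x : ℝ} (hx : x ≠ 0) :
    HasDerivAt (fun s => ∑ i, c i * s ^ m i) (∑ i, c i * m i * x ^ (m i - 1)) x :=
  HasDerivAt.fun_sum fun i _ => by
    simpa [mul_assoc] using (hasDerivAt_zpow (m i) x (.inl hx)).const_mul (c i)

theorem zpow_mul_sum_zpow {x : ℝ} (hx : x ≠ 0) (k : ℤ) :
    x ^ k * ∑ i, c i * x ^ m i = ∑ i, c i * x ^ (k + m i) := by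
  simp only [Finset.mul_sum, zpow_add₀ hx]
  exact Finset.sum_congr rfl fun i _ => by ring

theorem weightedDeriv_eqOn_of_eqOn_sum_zpow {U : Set ℝ} (hU : IsOpen U) (hU0 : (0 : ℝ) ∉ U)
    {f : ℝ → ℝ} (hf : EqOn f (fun s => ∑ i, c i * s ^ m i) U) (k : ℤ) :
    EqOn (weightedDeriv k f) (fun x => ∑ i, c i * (k + m i : ℤ) * x ^ (k + m i - 1)) U := by
  intro x hx
  have hweighted : (fun s => s ^ k * f s) =ᶠ[nhds x] fun s => ∑ i, c i * s ^ (k + m i) :=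
    Filter.eventually_of_mem (hU.mem_nhds hx) fun s hs => by
      show s ^ k * f s = _
      rw [hf hs, zpow_mul_sum_zpow c m (ne_of_mem_of_not_mem hs hU0)]
  exact hweighted.deriv_eq.trans (hasDerivAt_sum_zpow c _ (ne_of_mem_of_not_mem hx hU0)).deriv

theorem Lrad_sum_zpow (n : ℕ) {x : ℝ} (hx : x ≠ 0) :
    Lrad n (fun s => ∑ i, c i * s ^ m i) x =
      -∑ i, c i * ((n + m i - 1) * (m i - 1) * (n + m i - 3)) * x ^ (m i - 3) := by
  have h0 : (0 : ℝ) ∉ ({0}ᶜ : Set ℝ) := by simp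
  have hU := isOpen_compl_singleton (x := (0 : ℝ))
  have h1 := weightedDeriv_eqOn_of_eqOn_sum_zpow c m hU h0 (fun _ _ => rfl) (n - 1)
  have h2 := weightedDeriv_eqOn_of_eqOn_sum_zpow _ _ hU h0 h1 (1 - n)
  have h3 := weightedDeriv_eqOn_of_eqOn_sum_zpow _ _ hU h0 h2 (n - 1)
  rw [Lrad_eq_weightedDeriv, h3 hx, neg_mul, zpow_mul_sum_zpow _ _ hx]
  congr 1
  refine Finset.sum_congr rfl fun i _ => ?_
  push_cast
  ring_nf

end SumZpow

theorem exists_eqOn_sum_zpow_of_weightedDeriv_eqOn {N : ℕ} (c : Fin N → ℝ) (m : Fin N → ℤ)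
    (hm : ∀ i, m i ≠ -1) {I : Set ℝ} (hI : IsOpen I) (hI' : IsPreconnected I)
    (hI0 : (0 : ℝ) ∉ I) {f : ℝ → ℝ} (hf : DifferentiableOn ℝ f I) {k : ℤ}
    (h : EqOn (weightedDeriv k f) (fun x => ∑ i, c i * x ^ m i) I) :
    ∃ K, EqOn f (fun x => ∑ i, vecCons K (fun i => c i / (m i + 1)) i *
      x ^ vecCons (-k) (fun i => -k + (m i + 1)) i) I := by
  have hF : ∀ x ∈ I, HasDerivAt (fun s => ∑ i, c i / (m i + 1) * s ^ (m i + 1))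
      (∑ i, c i * x ^ m i) x := fun x hx => by
    convert hasDerivAt_sum_zpow (fun i => c i / (m i + 1)) (fun i => m i + 1)
      (ne_of_mem_of_not_mem hx hI0) using 2 with i
    have : (m i : ℝ) + 1 ≠ 0 := by exact_mod_cast hm i ∘ eq_neg_of_add_eq_zero_left
    push_cast
    field_simp
    simp
  have hweighted : DifferentiableOn ℝ (fun s => s ^ k * f s) I := fun x hx =>
    ((differentiableAt_zpow.2 (.inl (ne_of_mem_of_not_mem hx hI0))).differentiableWithinAt).mul
      (hf x hx)
  obtain ⟨K, hK⟩ := hI.exists_eq_add_of_deriv_eq hI' hweighted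
    (fun x hx => (hF x hx).differentiableAt.differentiableWithinAt)
    (fun x hx => (h hx).trans (hF x hx).deriv.symm)
  refine ⟨K, fun x hx => ?_⟩
  have hx0 := ne_of_mem_of_not_mem hx hI0
  calc f x = x ^ (-k) * (x ^ k * f x) := by
        rw [← mul_assoc, ← zpow_add₀ hx0, neg_add_cancel, zpow_zero, one_mul]
    _ = K * x ^ (-k) + ∑ i, c i / (m i + 1) * x ^ (-k + (m i + 1)) := by
        rw [show x ^ k * f x = _ from hK hx, mul_add, zpow_mul_sum_zpow _ _ hx0, add_comm,
          mul_comm]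
    _ = _ := by simp [Fin.sum_univ_succ]

noncomputable def radialSolution (n : ℕ) (c0 c1 c2 c3 : ℝ) (r : ℝ) : ℝ :=
  c0 * r ^ 3 + c1 * r ^ ((3 : ℤ) - (n : ℤ)) + c2 * r + c3 * r ^ ((1 : ℤ) - (n : ℤ))

theorem radialSolution_eq_sum_zpow (n : ℕ) (c0 c1 c2 c3 : ℝ) :
    radialSolution n c0 c1 c2 c3 =
      fun r => ∑ i, ![c0, c1, c2, c3] i * r ^ ![3, 3 - (n : ℤ), 1, 1 - n] i := by
  funext r
  simp [radialSolution, Fin.sum_univ_four]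

theorem Lrad_radialSolution (n : ℕ) (c0 c1 c2 c3 : ℝ) {r : ℝ} (hr : r ≠ 0) :
    Lrad n (radialSolution n c0 c1 c2 c3) r = -(2 * n * (n + 2) * c0) := by
  rw [radialSolution_eq_sum_zpow, Lrad_sum_zpow _ _ n hr]
  simp only [Fin.sum_univ_succ, Fin.sum_univ_zero, cons_val_zero, cons_val_succ, cons_val_fin_one,
    sub_self, zpow_zero]
  push_cast
  ring

theorem exists_eqOn_radialSolution_of_Lrad_eq {n : ℕ} (hn : n ≠ 0) (hn2 : n ≠ 2) {lam : ℝ}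
    {I : Set ℝ} (hI : IsOpen I) (hI' : IsPreconnected I) (hI0 : (0 : ℝ) ∉ I) {z : ℝ → ℝ}
    (hz : ContDiffOn ℝ 3 z I) (hL : ∀ r ∈ I, Lrad n z r = lam) :
    ∃ c1 c2 c3, EqOn z (radialSolution n (-lam / (2 * n * (n + 2))) c1 c2 c3) I := by
  have hg1 := contDiffOn_weightedDeriv (l := 2) hz hI hI0 (n - 1)
  have hg2 := contDiffOn_weightedDeriv (l := 1) hg1 hI hI0 (1 - n)
  have h3 : EqOn (weightedDeriv (n - 1) (weightedDeriv (1 - n) (weightedDeriv (n - 1) z)))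
      (fun x => ∑ i, ![-lam] i * x ^ ![(n : ℤ) - 1] i) I := by
    intro x hx
    simp only [Fin.sum_univ_one, cons_val_fin_one]
    rw [← hL x hx, Lrad_eq_weightedDeriv]
    field_simp
    rw [mul_assoc, ← zpow_add₀ (ne_of_mem_of_not_mem hx hI0)]
    simp
  obtain ⟨K1, h2⟩ := exists_eqOn_sum_zpow_of_weightedDeriv_eqOn _ _
    (by simp only [Fin.forall_fin_one, cons_val_fin_one]; omega)
    hI hI' hI0 (hg2.differentiableOn one_ne_zero) h3
  obtain ⟨K2, h1⟩ := exists_eqOn_sum_zpow_of_weightedDeriv_eqOn _ _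
    (by simp only [Fin.forall_fin_succ, IsEmpty.forall_iff, cons_val_zero, cons_val_succ,
      cons_val_fin_one, and_true]; omega)
    hI hI' hI0 (hg1.differentiableOn two_ne_zero) h2
  obtain ⟨K3, h0⟩ := exists_eqOn_sum_zpow_of_weightedDeriv_eqOn _ _
    (by simp only [Fin.forall_fin_succ, IsEmpty.forall_iff, cons_val_zero, cons_val_succ,
      cons_val_fin_one, and_true]; omega)
    hI hI' hI0 (hz.differentiableOn three_ne_zero) h1
  refine ⟨K1 / (2 - n) / 2, K2 / n, K3, fun r hr => ?_⟩
  have hn' : (n : ℝ) ≠ 0 := Nat.cast_ne_zero.2 hn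
  have hc0 : -lam / (2 * n * (n + 2)) = -lam / n / 2 / (n + 2) := by field_simp
  rw [h0 hr, radialSolution_eq_sum_zpow, hc0]
  simp only [Fin.sum_univ_succ, Fin.sum_univ_zero, cons_val_zero, cons_val_succ, cons_val_fin_one]
  push_cast
  ring_nf

/-- For `n ≠ 2`, the general solution of `L_n z = λ` is
`z(r) = c₀ r³ + c₁ r^{3−n} + c₂ r + c₃ r^{1−n}` with `c₀ = −λ/(2n(n+2))`. -/
theorem stmt_2 (n : ℕ) (hn : 1 ≤ n) (hn2 : n ≠ 2) (lam c0 : ℝ)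
    (hc0 : c0 = -lam / (2 * (n : ℝ) * ((n : ℝ) + 2))) :
    (∀ c1 c2 c3 : ℝ, ∀ r : ℝ, 0 < r →
      Lrad n (fun s => c0 * s ^ 3 + c1 * s ^ ((3 : ℤ) - (n : ℤ)) + c2 * s
        + c3 * s ^ ((1 : ℤ) - (n : ℤ))) r = lam) ∧
    (∀ α β : ℝ, 0 < α → α < β → ∀ z : ℝ → ℝ,
      ContDiffOn ℝ 3 z (Set.Ioo α β) → (∀ r ∈ Set.Ioo α β, Lrad n z r = lam) →
      ∃ c1 c2 c3 : ℝ, ∀ r ∈ Set.Ioo α β,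
        z r = c0 * r ^ 3 + c1 * r ^ ((3 : ℤ) - (n : ℤ)) + c2 * r
          + c3 * r ^ ((1 : ℤ) - (n : ℤ))) := by
  have hn0 : n ≠ 0 := by omega
  refine ⟨fun c1 c2 c3 r hr => ?_, fun α β hα _ z hz hL => ?_⟩
  · have hn' : (n : ℝ) ≠ 0 := Nat.cast_ne_zero.2 hn0
    exact (Lrad_radialSolution n c0 c1 c2 c3 hr.ne').trans (by rw [hc0]; field_simp)
  · subst hc0
    exact exists_eqOn_radialSolution_of_Lrad_eq hn0 hn2 isOpen_Ioo isPreconnected_Ioo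
      (fun h => hα.not_gt h.1) hz hL
end

section
/- Let n ≥ 1 be an integer and R > 0, and define z : (0,∞) → ℝ by z(r) = (1/2)(r/R)³ − (3/2)(r/R). Then (L_n z)(r) = −n(n+2)/R³ for all r > 0, z(R) = −1, z′(R) = 0, and |z(r)| ≤ 1 for all r ∈ [0, R]. (This shows that every ball in ℝⁿ is calibrable: Z(x) = z(|x|)x/|x| is a radial Cahn–Hoffman calibration for B_R with signature −1.) -/
open Set

theorem deriv_const_mul_zpow_add_const_mul_zpow (c d : ℝ) (p q : ℤ) {x : ℝ} (hx : x ≠ 0) :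
    deriv (fun w => c * w ^ p + d * w ^ q) x = c * p * x ^ (p - 1) + d * q * x ^ (q - 1) := by
  have hp := (hasDerivAt_zpow p x (.inl hx)).const_mul c
  have hq := (hasDerivAt_zpow q x (.inl hx)).const_mul d
  exact (hp.add hq).deriv.trans (by ring)

theorem eqOn_Ioi_zpow_mul_deriv {f : ℝ → ℝ} {c d : ℝ} {p q : ℤ}
    (hf : EqOn f (fun w => c * w ^ p + d * w ^ q) (Ioi 0)) (k : ℤ) :
    EqOn (fun s => s ^ k * deriv f s)
      (fun s => c * p * s ^ (p + k - 1) + d * q * s ^ (q + k - 1)) (Ioi 0) := by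
  intro s (hs : 0 < s)
  simp only [hf.deriv isOpen_Ioi hs, deriv_const_mul_zpow_add_const_mul_zpow c d p q hs.ne',
    add_sub_right_comm _ k, zpow_add₀ hs.ne']
  ring

theorem Lrad_odd_cubic (n : ℕ) (a b : ℝ) {r : ℝ} (hr : 0 < r) :
    Lrad n (fun w => a * w ^ 3 + b * w) r = -(2 * n * (n + 2) * a) := by
  have h₀ : EqOn (fun w => w ^ ((n : ℤ) - 1) * (a * w ^ 3 + b * w))
      (fun w => a * w ^ ((n : ℤ) + 2) + b * w ^ (n : ℤ)) (Ioi 0) := by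
    intro w (hw : 0 < w)
    simp only [zpow_add₀ hw.ne', zpow_sub₀ hw.ne', zpow_one]
    field_simp
  have h₁ := eqOn_Ioi_zpow_mul_deriv h₀ (1 - n)
  have h₂ := eqOn_Ioi_zpow_mul_deriv h₁ (n - 1)
  have h₃ := eqOn_Ioi_zpow_mul_deriv h₂ (1 - n)
  have hr₃ := h₃ hr
  dsimp only at hr₃
  rw [Lrad, neg_mul, hr₃]
  push_cast
  ring_nf
  simp

theorem abs_half_cube_sub_three_halves_le_one {t : ℝ} (ht : t ∈ Icc (-2) 2) :
    |(1 / 2) * t ^ 3 - (3 / 2) * t| ≤ 1 := by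
  obtain ⟨ht₁, ht₂⟩ := ht
  rw [abs_le]
  constructor
  · nlinarith [mul_nonneg (sq_nonneg (t - 1)) (by linarith : (0 : ℝ) ≤ t + 2)]
  · nlinarith [mul_nonneg (sq_nonneg (t + 1)) (by linarith : (0 : ℝ) ≤ 2 - t)]

theorem stmt_4_general (n : ℕ) (R : ℝ) (hR : 0 < R)
    (z : ℝ → ℝ) (hz : z = fun r => (1 / 2) * (r / R) ^ 3 - (3 / 2) * (r / R)) :
    (∀ r : ℝ, 0 < r → Lrad n z r = -((n : ℝ) * ((n : ℝ) + 2)) / R ^ 3) ∧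
    z R = -1 ∧ deriv z R = 0 ∧ ∀ r ∈ Set.Icc 0 R, |z r| ≤ 1 := by
  have hz' : z = fun w => 1 / (2 * R ^ 3) * w ^ 3 + -3 / (2 * R) * w := by
    rw [hz]; funext w; field_simp; ring
  refine ⟨fun r hr => ?_, ?_, ?_, fun r ⟨hr₀, hrR⟩ => ?_⟩
  · rw [hz', Lrad_odd_cubic n _ _ hr]
    field_simp
  · simp only [hz, div_self hR.ne']
    norm_num
  · have hderiv := ((hasDerivAt_pow 3 R).const_mul (1 / (2 * R ^ 3))).add
      ((hasDerivAt_id R).const_mul (-3 / (2 * R)))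
    rw [hz']
    exact hderiv.deriv.trans (by field_simp; ring)
  · rw [hz]
    refine abs_half_cube_sub_three_halves_le_one ⟨?_, ?_⟩
    · linarith [div_nonneg hr₀ hR.le]
    · linarith [(div_le_one hR).mpr hrR]

/-- Every ball is calibrable: `z(r) = (1/2)(r/R)³ − (3/2)(r/R)` satisfies
`L_n z = −n(n+2)/R³`, `z(R) = −1`, `z′(R) = 0` and `|z| ≤ 1` on `[0, R]`. -/
theorem stmt_4 (n : ℕ) (hn : 1 ≤ n) (R : ℝ) (hR : 0 < R)
    (z : ℝ → ℝ) (hz : z = fun r => (1 / 2) * (r / R) ^ 3 - (3 / 2) * (r / R)) :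
    (∀ r : ℝ, 0 < r → Lrad n z r = -((n : ℝ) * ((n : ℝ) + 2)) / R ^ 3) ∧
    z R = -1 ∧ deriv z R = 0 ∧ ∀ r ∈ Set.Icc 0 R, |z r| ≤ 1 :=
  stmt_4_general n R hR z hz
end

section
/- Let n ≥ 1 be an integer with n ≠ 2 and R > 0, and define z : (0,∞) → ℝ by z(r) = −((n−1)/2)(r/R)^{3−n} + ((n−3)/2)(r/R)^{1−n}. Then (L_n z)(r) = 0 for all r > 0, z(R) = −1, z′(R) = 0, and |z(r)| ≤ 1 for all r ≥ R. (This shows that for n ≠ 2 the complement of every ball in ℝⁿ is calibrable via the radial field Z(x) = z(|x|)x/|x|.) -/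
private lemma key_pow_bound (m : ℕ) : ∀ u : ℝ, 0 ≤ u → u ≤ 1 →
    u ^ m * (1 + (m : ℝ) * (1 - u)) ≤ 1 := by
  induction m with
  | zero => intro u h0 h1; simp
  | succ m ih =>
    intro u h0 h1
    have h2 := ih u h0 h1
    have h3 : u ^ (m + 1) ≤ 1 := pow_le_one₀ h0 h1
    have h4 : u * (u ^ m * (1 + (m : ℝ) * (1 - u))) ≤ u * 1 :=
      mul_le_mul_of_nonneg_left h2 h0
    have h5 : u ^ (m + 1) * (1 - u) ≤ 1 * (1 - u) :=
      mul_le_mul_of_nonneg_right h3 (by linarith)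
    push_cast
    rw [pow_succ] at h3 h5 ⊢
    nlinarith [pow_nonneg h0 m]

/-- For `n ≠ 2` the complement of every ball is calibrable:
`z(r) = −((n−1)/2)(r/R)^{3−n} + ((n−3)/2)(r/R)^{1−n}` satisfies `L_n z = 0`,
`z(R) = −1`, `z′(R) = 0` and `|z| ≤ 1` on `[R, ∞)`. -/
theorem stmt_5 (n : ℕ) (hn : 1 ≤ n) (hn2 : n ≠ 2) (R : ℝ) (hR : 0 < R)
    (z : ℝ → ℝ)
    (hz : z = fun r => -(((n : ℝ) - 1) / 2) * (r / R) ^ ((3 : ℤ) - (n : ℤ))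
      + (((n : ℝ) - 3) / 2) * (r / R) ^ ((1 : ℤ) - (n : ℤ))) :
    (∀ r : ℝ, 0 < r → Lrad n z r = 0) ∧
    z R = -1 ∧ deriv z R = 0 ∧ ∀ r : ℝ, R ≤ r → |z r| ≤ 1 := by
  have hR' : R ≠ 0 := hR.ne'
  set a : ℝ := -(((n : ℝ) - 1) / 2) * (R ^ ((3 : ℤ) - (n : ℤ)))⁻¹ with ha
  set b : ℝ := (((n : ℝ) - 3) / 2) * (R ^ ((1 : ℤ) - (n : ℤ)))⁻¹ with hb
  have hz' : ∀ w : ℝ, z w = a * w ^ ((3 : ℤ) - (n : ℤ)) + b * w ^ ((1 : ℤ) - (n : ℤ)) := by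
    intro w
    simp only [hz, ha, hb, div_zpow]
    ring
  -- innermost derivative
  have hd1 : ∀ u : ℝ, u ≠ 0 →
      deriv (fun w : ℝ => w ^ ((n : ℤ) - 1) * z w) u = a * (2 * u) := by
    intro u hu
    have hev : (fun w : ℝ => w ^ ((n : ℤ) - 1) * z w)
        =ᶠ[nhds u] (fun w : ℝ => a * w ^ 2 + b) := by
      filter_upwards [eventually_ne_nhds hu] with w hw
      rw [hz' w]
      have e1 : w ^ ((n : ℤ) - 1) * w ^ ((3 : ℤ) - (n : ℤ)) = w ^ (2 : ℤ) := by
        rw [← zpow_add₀ hw, show (n : ℤ) - 1 + ((3 : ℤ) - (n : ℤ)) = 2 by ring]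
      have e2 : w ^ ((n : ℤ) - 1) * w ^ ((1 : ℤ) - (n : ℤ)) = 1 := by
        rw [← zpow_add₀ hw, show (n : ℤ) - 1 + ((1 : ℤ) - (n : ℤ)) = 0 by ring, zpow_zero]
      calc w ^ ((n : ℤ) - 1) * (a * w ^ ((3 : ℤ) - (n : ℤ)) + b * w ^ ((1 : ℤ) - (n : ℤ)))
          = a * (w ^ ((n : ℤ) - 1) * w ^ ((3 : ℤ) - (n : ℤ)))
            + b * (w ^ ((n : ℤ) - 1) * w ^ ((1 : ℤ) - (n : ℤ))) := by ring
        _ = a * w ^ (2 : ℤ) + b * 1 := by rw [e1, e2]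
        _ = a * w ^ 2 + b := by rw [mul_one, zpow_two, sq]
    rw [hev.deriv_eq]
    have hder : HasDerivAt (fun w : ℝ => a * w ^ 2 + b) (a * (2 * u ^ 1)) u :=
      ((hasDerivAt_pow 2 u).const_mul a).add_const b
    rw [hder.deriv]
    ring
  -- second derivative layer
  have hd2 : ∀ s : ℝ, s ≠ 0 →
      deriv (fun u : ℝ => u ^ ((1 : ℤ) - (n : ℤ)) *
        deriv (fun w : ℝ => w ^ ((n : ℤ) - 1) * z w) u) s
      = 2 * a * (((2 : ℤ) - (n : ℤ) : ℤ) : ℝ) * s ^ ((1 : ℤ) - (n : ℤ)) := by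
    intro s hs
    have hev : (fun u : ℝ => u ^ ((1 : ℤ) - (n : ℤ)) *
          deriv (fun w : ℝ => w ^ ((n : ℤ) - 1) * z w) u)
        =ᶠ[nhds s] (fun u : ℝ => 2 * a * u ^ ((2 : ℤ) - (n : ℤ))) := by
      filter_upwards [eventually_ne_nhds hs] with u hu
      rw [hd1 u hu]
      calc u ^ ((1 : ℤ) - (n : ℤ)) * (a * (2 * u))
          = 2 * a * (u ^ ((1 : ℤ) - (n : ℤ)) * u ^ (1 : ℤ)) := by rw [zpow_one]; ring
        _ = 2 * a * u ^ ((2 : ℤ) - (n : ℤ)) := by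
            rw [← zpow_add₀ hu, show (1 : ℤ) - (n : ℤ) + 1 = (2 : ℤ) - (n : ℤ) by ring]
    rw [hev.deriv_eq]
    have hder : HasDerivAt (fun u : ℝ => 2 * a * u ^ ((2 : ℤ) - (n : ℤ)))
        (2 * a * ((((2 : ℤ) - (n : ℤ) : ℤ) : ℝ) * s ^ ((2 : ℤ) - (n : ℤ) - 1))) s :=
      (hasDerivAt_zpow _ s (Or.inl hs)).const_mul (2 * a)
    rw [hder.deriv, show (2 : ℤ) - (n : ℤ) - 1 = (1 : ℤ) - (n : ℤ) by ring]
    ring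
  -- Lrad vanishes
  have hL : ∀ r : ℝ, 0 < r → Lrad n z r = 0 := by
    intro r hr
    have hev : (fun s : ℝ => s ^ ((n : ℤ) - 1) *
          deriv (fun u : ℝ => u ^ ((1 : ℤ) - (n : ℤ)) *
            deriv (fun w : ℝ => w ^ ((n : ℤ) - 1) * z w) u) s)
        =ᶠ[nhds r] (fun _ : ℝ => 2 * a * (((2 : ℤ) - (n : ℤ) : ℤ) : ℝ)) := by
      filter_upwards [eventually_ne_nhds hr.ne'] with s hs
      rw [hd2 s hs]
      calc s ^ ((n : ℤ) - 1) * (2 * a * (((2 : ℤ) - (n : ℤ) : ℤ) : ℝ) * s ^ ((1 : ℤ) - (n : ℤ)))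
          = 2 * a * (((2 : ℤ) - (n : ℤ) : ℤ) : ℝ) *
            (s ^ ((n : ℤ) - 1) * s ^ ((1 : ℤ) - (n : ℤ))) := by ring
        _ = 2 * a * (((2 : ℤ) - (n : ℤ) : ℤ) : ℝ) := by
            rw [← zpow_add₀ hs, show (n : ℤ) - 1 + ((1 : ℤ) - (n : ℤ)) = 0 by ring,
              zpow_zero, mul_one]
    unfold Lrad
    rw [hev.deriv_eq, deriv_const, mul_zero]
  -- z R = -1
  have hzR : z R = -1 := by
    rw [hz]
    simp only [div_self hR']
    rw [one_zpow, one_zpow]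
    ring
  -- deriv z R = 0
  have hdz : deriv z R = 0 := by
    have hzfun : z = fun w : ℝ => a * w ^ ((3 : ℤ) - (n : ℤ)) + b * w ^ ((1 : ℤ) - (n : ℤ)) :=
      funext hz'
    have hder : HasDerivAt z
        (a * ((((3 : ℤ) - (n : ℤ) : ℤ) : ℝ) * R ^ ((3 : ℤ) - (n : ℤ) - 1))
          + b * ((((1 : ℤ) - (n : ℤ) : ℤ) : ℝ) * R ^ ((1 : ℤ) - (n : ℤ) - 1))) R := by
      rw [hzfun]
      exact ((hasDerivAt_zpow _ R (Or.inl hR')).const_mul a).add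
        ((hasDerivAt_zpow _ R (Or.inl hR')).const_mul b)
    rw [hder.deriv]
    have e1 : R ^ ((3 : ℤ) - (n : ℤ) - 1) = R ^ ((3 : ℤ) - (n : ℤ)) * R⁻¹ :=
      zpow_sub_one₀ hR' _
    have e2 : R ^ ((1 : ℤ) - (n : ℤ) - 1) = R ^ ((1 : ℤ) - (n : ℤ)) * R⁻¹ :=
      zpow_sub_one₀ hR' _
    have hP : R ^ ((3 : ℤ) - (n : ℤ)) ≠ 0 := zpow_ne_zero _ hR'
    have hQ : R ^ ((1 : ℤ) - (n : ℤ)) ≠ 0 := zpow_ne_zero _ hR'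
    rw [e1, e2, ha, hb]
    push_cast
    field_simp
    ring
  refine ⟨hL, hzR, hdz, ?_⟩
  -- the bound |z r| ≤ 1 for r ≥ R
  intro r hr
  have hr0 : 0 < r := lt_of_lt_of_le hR hr
  rcases Nat.lt_or_ge n 3 with h3 | h3
  · -- n = 1
    have hn1 : n = 1 := by omega
    subst hn1
    rw [hz]
    norm_num
  · -- n ≥ 3
    obtain ⟨m, rfl⟩ : ∃ m, n = m + 3 := ⟨n - 3, by omega⟩
    set u : ℝ := R / r with hu
    have hu0 : 0 < u := div_pos hR hr0
    have hu1 : u ≤ 1 := (div_le_one hr0).mpr hr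
    have hp1 : (r / R) ^ ((3 : ℤ) - ((m + 3 : ℕ) : ℤ)) = u ^ m := by
      rw [show (3 : ℤ) - ((m + 3 : ℕ) : ℤ) = -(m : ℤ) by push_cast; ring,
        zpow_neg, zpow_natCast, ← inv_pow, inv_div]
    have hp2 : (r / R) ^ ((1 : ℤ) - ((m + 3 : ℕ) : ℤ)) = u ^ (m + 2) := by
      rw [show (1 : ℤ) - ((m + 3 : ℕ) : ℤ) = -((m + 2 : ℕ) : ℤ) by push_cast; ring,
        zpow_neg, zpow_natCast, ← inv_pow, inv_div]
    rw [hz]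
    simp only [hp1, hp2]
    have hk := key_pow_bound m u hu0.le hu1
    have hv0 : (0 : ℝ) ≤ u ^ m := pow_nonneg hu0.le m
    have hM : (0 : ℝ) ≤ (m : ℝ) := Nat.cast_nonneg m
    have hsq : (0 : ℝ) ≤ u ^ m * (1 - u) ^ 2 * (m : ℝ) :=
      mul_nonneg (mul_nonneg hv0 (sq_nonneg _)) hM
    have hprod : (0 : ℝ) ≤ (m : ℝ) * u ^ m * (1 - u ^ 2) := by
      have : (0 : ℝ) ≤ 1 - u ^ 2 := by nlinarith
      exact mul_nonneg (mul_nonneg hM hv0) this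
    rw [abs_le]
    push_cast
    rw [show u ^ (m + 2) = u ^ m * u ^ 2 by rw [pow_add]]
    constructor
    · nlinarith [hk, hsq]
    · nlinarith [hprod, hv0]
end

section
/- Let n ≥ 1 be an integer with n ≠ 2, and let 0 < R₀ < R₁. Then there exist c₀, c₁, c₂, c₃ ∈ ℝ such that the function z(r) = c₀ r³ + c₁ r^{3−n} + c₂ r + c₃ r^{1−n} satisfies z(R₀) = 1, z(R₁) = −1, z′(R₀) = 0, z′(R₁) = 0, and |z(r)| ≤ 1 for all r ∈ [R₀, R₁]. (This shows that for n ≠ 2 every annulus A_{R₀}^{R₁} with constant signature is calibrable via the radial field Z(x) = z(|x|)x/|x|, whose associated quantity L_n z is constant.) -/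
/-!
For `n = 1` the profile is a cubic polynomial, and `z = 1 - 6 s ^ 2 + 4 s ^ 3` with
`s = (r - R₀) / (R₁ - R₀)` works.

For `n ≥ 3` the four boundary conditions form a linear system in `c₀, …, c₃`, solved by Cramer's
rule. Now `rⁿ z'(r) = 3 c₀ r ^ (n + 2) + c₂ rⁿ + (3 - n) c₁ r ^ 2 + (1 - n) c₃`, and the solution
has `c₀ > 0 > c₃`, so this four-term polynomial has positive outer coefficients. Rolle's theorem
applied to it divided by `r ^ 2` shows that it has no zero strictly between two positive zeros
(a case of Descartes' rule of signs). It vanishes at `R₀` and `R₁`, and since `z` drops by `2` it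
is negative somewhere in between, hence throughout: `z` decreases from `1` to `-1`. The signs of
`c₀`, `c₃` and of the determinant reduce to one-variable inequalities; the determinant's is
`k sinh 2t < 2 sinh kt`, i.e. the monotonicity of `sinh x / x`.
-/

open Real Set

def IsCalibrationProfile (R0 R1 : ℝ) (z : ℝ → ℝ) : Prop :=
  z R0 = 1 ∧ z R1 = -1 ∧ deriv z R0 = 0 ∧ deriv z R1 = 0 ∧ ∀ r ∈ Icc R0 R1, |z r| ≤ 1

lemma isCalibrationProfile_of_hasDerivAt {z f : ℝ → ℝ} {R0 R1 : ℝ}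
    (hz : ∀ r ∈ Icc R0 R1, HasDerivAt z (f r) r) (hf : ∀ r ∈ Ioo R0 R1, f r ≤ 0)
    (hz0 : z R0 = 1) (hz1 : z R1 = -1) (hf0 : f R0 = 0) (hf1 : f R1 = 0) (h01 : R0 ≤ R1) :
    IsCalibrationProfile R0 R1 z := by
  have hanti : AntitoneOn z (Icc R0 R1) := by
    refine antitoneOn_of_hasDerivWithinAt_nonpos (convex_Icc R0 R1)
      (fun r hr => (hz r hr).continuousAt.continuousWithinAt) (f' := f) ?_ ?_
    all_goals rw [interior_Icc]
    · exact fun r hr => (hz r (Ioo_subset_Icc_self hr)).hasDerivWithinAt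
    · exact hf
  refine ⟨hz0, hz1, (hz R0 (left_mem_Icc.2 h01)).deriv.trans hf0,
    (hz R1 (right_mem_Icc.2 h01)).deriv.trans hf1, fun r hr => abs_le.2 ⟨?_, ?_⟩⟩
  · exact hz1 ▸ hanti hr (right_mem_Icc.2 h01) hr.2
  · exact hz0 ▸ hanti (left_mem_Icc.2 h01) hr hr.1

def quadrinomial (k : ℕ) (A B C D r : ℝ) : ℝ :=
  A * r ^ (k + 2) + B * r ^ k + C * r ^ 2 + D

lemma exists_critical_of_quadrinomial_eq_zero {k : ℕ} (hk : 0 < k) {A B C D a b : ℝ}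
    (ha : 0 < a) (hab : a < b) (hFa : quadrinomial k A B C D a = 0)
    (hFb : quadrinomial k A B C D b = 0) :
    ∃ s ∈ Ioo a b, s ^ k * (A * k * s ^ 2 + B * (k - 2)) = 2 * D := by
  obtain ⟨j, rfl⟩ : ∃ j, k = j + 1 := ⟨k - 1, by omega⟩
  set F := quadrinomial (j + 1) A B C D
  have hF : ∀ r,
      HasDerivAt F (A * (j + 3) * r ^ (j + 2) + B * (j + 1) * r ^ j + C * 2 * r) r := by
    intro r
    have := ((((hasDerivAt_pow (j + 3) r).const_mul A).add
      ((hasDerivAt_pow (j + 1) r).const_mul B)).add ((hasDerivAt_pow 2 r).const_mul C)).add_const D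
    refine this.congr_deriv ?_
    push_cast
    ring
  -- Rolle's theorem for `F r / r ^ 2`, whose critical points are the zeros of `r F' - 2 F`
  have hpos : ∀ r ∈ Icc a b, r ^ 2 ≠ 0 := fun r hr => pow_ne_zero 2 (ha.trans_le hr.1).ne'
  obtain ⟨s, hs, hds⟩ := exists_hasDerivAt_eq_zero (f := fun r => F r / r ^ 2) hab
    (fun r hr =>
      ((hF r).continuousAt.div (continuous_pow 2).continuousAt (hpos r hr)).continuousWithinAt)
    (by simp only [F, hFa, hFb, zero_div])
    (fun r hr => (hF r).div (hasDerivAt_pow 2 r) (hpos r (Ioo_subset_Icc_self hr)))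
  refine ⟨s, hs, ?_⟩
  have hs0 : s ≠ 0 := (ha.trans hs.1).ne'
  rw [div_eq_zero_iff, or_iff_left (pow_ne_zero 2 (pow_ne_zero 2 hs0))] at hds
  simp only [F, quadrinomial] at hds
  push_cast
  have : s * ((s ^ (j + 1) * (A * (j + 1) * s ^ 2 + B * (j + 1 - 2))) - 2 * D) = 0 := by
    linear_combination hds
  linear_combination (mul_eq_zero.1 this).resolve_left hs0

lemma quadrinomial_ne_zero_of_mem_Ioo {k : ℕ} (hk : 0 < k) {A B C D a b r : ℝ}
    (hA : 0 < A) (hD : 0 < D) (ha : 0 < a) (hr : r ∈ Ioo a b)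
    (hFa : quadrinomial k A B C D a = 0) (hFb : quadrinomial k A B C D b = 0) :
    quadrinomial k A B C D r ≠ 0 := by
  intro hFr
  obtain ⟨s, hs, hs_eq⟩ := exists_critical_of_quadrinomial_eq_zero hk ha hr.1 hFa hFr
  obtain ⟨t, ht, ht_eq⟩ :=
    exists_critical_of_quadrinomial_eq_zero hk (ha.trans hr.1) hr.2 hFr hFb
  have hs0 : 0 < s := ha.trans hs.1
  have hst : s < t := hs.2.trans ht.1
  -- `s ↦ s ^ k * (A k s ^ 2 + B (k - 2))` is strictly increasing where it is positive
  have hk' : (0 : ℝ) < k := Nat.cast_pos.2 hk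
  have hψs : 0 < A * k * s ^ 2 + B * (k - 2) :=
    pos_of_mul_pos_right (by rw [hs_eq]; linarith) (by positivity)
  have hψ : A * k * s ^ 2 + B * (k - 2) < A * k * t ^ 2 + B * (k - 2) := by
    have := pow_lt_pow_left₀ hst hs0.le two_ne_zero
    have := mul_pos hA hk'
    nlinarith
  have := mul_lt_mul'' (pow_lt_pow_left₀ hst hs0.le hk.ne') hψ (by positivity) hψs.le
  linarith

noncomputable def radialProfile (n : ℕ) (c0 c1 c2 c3 r : ℝ) : ℝ :=
  c0 * r ^ 3 + c1 * r ^ ((3 : ℤ) - n) + c2 * r + c3 * r ^ ((1 : ℤ) - n)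

lemma radialProfile_mul_pow (n : ℕ) (c0 c1 c2 c3 : ℝ) {r : ℝ} (hr : r ≠ 0) :
    radialProfile n c0 c1 c2 c3 r * r ^ n
      = c0 * r ^ 3 * r ^ n + c1 * r ^ 3 + c2 * r * r ^ n + c3 * r := by
  have hn : r ^ n ≠ 0 := pow_ne_zero n hr
  simp only [radialProfile, zpow_sub₀ hr, zpow_natCast]
  field_simp

lemma hasDerivAt_radialProfile (n : ℕ) (c0 c1 c2 c3 : ℝ) {r : ℝ} (hr : r ≠ 0) :
    HasDerivAt (radialProfile n c0 c1 c2 c3)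
      (quadrinomial n (3 * c0) c2 ((3 - n) * c1) ((1 - n) * c3) r / r ^ n) r := by
  have d1 := (hasDerivAt_pow 3 r).const_mul c0
  have d2 := (hasDerivAt_zpow ((3 : ℤ) - n) r (Or.inl hr)).const_mul c1
  have d3 := (hasDerivAt_id r).const_mul c2
  have d4 := (hasDerivAt_zpow ((1 : ℤ) - n) r (Or.inl hr)).const_mul c3
  refine (((d1.add d2).add d3).add d4).congr_deriv ?_
  have hn : r ^ n ≠ 0 := pow_ne_zero n hr
  rw [show (3 : ℤ) - n - 1 = 2 - n by ring, show (1 : ℤ) - n - 1 = 0 - n by ring]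
  simp only [quadrinomial, zpow_sub₀ hr, zpow_natCast, zpow_zero]
  field_simp
  push_cast
  ring

lemma radialProfile_one (c0 c1 c2 c3 r : ℝ) :
    radialProfile 1 c0 c1 c2 c3 r = c0 * r ^ 3 + c1 * r ^ 2 + c2 * r + c3 := by
  norm_num [radialProfile]

lemma isCalibrationProfile_radialProfile {n : ℕ} (hn : 1 < n) {c0 c1 c2 c3 R0 R1 : ℝ}
    (hc0 : 0 < c0) (hc3 : c3 < 0) (h0 : 0 < R0) (h01 : R0 < R1)
    (hz0 : radialProfile n c0 c1 c2 c3 R0 = 1) (hz1 : radialProfile n c0 c1 c2 c3 R1 = -1)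
    (hF0 : quadrinomial n (3 * c0) c2 ((3 - n) * c1) ((1 - n) * c3) R0 = 0)
    (hF1 : quadrinomial n (3 * c0) c2 ((3 - n) * c1) ((1 - n) * c3) R1 = 0) :
    IsCalibrationProfile R0 R1 (radialProfile n c0 c1 c2 c3) := by
  set F := quadrinomial n (3 * c0) c2 ((3 - n) * c1) ((1 - n) * c3)
  have hz : ∀ r ∈ Icc R0 R1, HasDerivAt (radialProfile n c0 c1 c2 c3) (F r / r ^ n) r :=
    fun r hr => hasDerivAt_radialProfile n c0 c1 c2 c3 (h0.trans_le hr.1).ne'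
  have hF_ne : ∀ r ∈ Ioo R0 R1, F r ≠ 0 := by
    have hD : 0 < (1 - n : ℝ) * c3 :=
      mul_pos_of_neg_of_neg (by linarith [(Nat.one_lt_cast (α := ℝ)).2 hn]) hc3
    exact fun r hr => quadrinomial_ne_zero_of_mem_Ioo (by omega) (by linarith) hD h0 hr hF0 hF1
  -- `F` keeps one sign on `(R0, R1)`, and the mean value theorem shows it is negative somewhere
  obtain ⟨σ, hσ, hslope⟩ := exists_hasDerivAt_eq_slope _ _ h01
    (fun r hr => (hz r hr).continuousAt.continuousWithinAt)
    (fun r hr => hz r (Ioo_subset_Icc_self hr))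
  have hFσ : F σ < 0 := by
    have hσn : 0 < σ ^ n := pow_pos (h0.trans hσ.1) n
    have : F σ / σ ^ n < 0 := by
      rw [hslope, hz0, hz1]
      exact div_neg_of_neg_of_pos (by norm_num) (by linarith)
    simpa using (div_lt_iff₀ hσn).1 this
  have hF_cont : Continuous F := by unfold F quadrinomial; fun_prop
  have hF_neg : ∀ r ∈ Ioo R0 R1, F r < 0 := by
    intro r hr
    by_contra! hFr
    obtain ⟨ζ, hζ, hFζ⟩ := isPreconnected_Ioo.intermediate_value hσ hr hF_cont.continuousOn
      ⟨hFσ.le, hFr⟩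
    exact hF_ne ζ hζ hFζ
  refine isCalibrationProfile_of_hasDerivAt hz (fun r hr => ?_) hz0 hz1 (by rw [hF0, zero_div])
    (by rw [hF1, zero_div]) h01.le
  exact div_nonpos_of_nonpos_of_nonneg (hF_neg r hr).le (pow_pos (h0.trans hr.1) n).le

lemma exists_isCalibrationProfile_one {R0 R1 : ℝ} (h0 : 0 < R0) (h01 : R0 < R1) :
    ∃ c0 c1 c2 c3, IsCalibrationProfile R0 R1 (radialProfile 1 c0 c1 c2 c3) := by
  set T := R1 - R0
  have hT : 0 < T := sub_pos.2 h01
  -- `z = 1 - 6 s ^ 2 + 4 s ^ 3` with `s = (r - R0) / T`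
  refine ⟨4 / T ^ 3, -6 * (R0 + R1) / T ^ 3, 12 * R0 * R1 / T ^ 3,
    (R0 ^ 3 - 3 * R0 ^ 2 * R1 - 3 * R0 * R1 ^ 2 + R1 ^ 3) / T ^ 3, ?_⟩
  refine isCalibrationProfile_of_hasDerivAt (f := fun r => 12 * (r - R0) * (r - R1) / T ^ 3)
    (fun r hr => ?_) (fun r hr => ?_) ?_ ?_ (by simp) (by simp) h01.le
  · refine (hasDerivAt_radialProfile 1 _ _ _ _ (h0.trans_le hr.1).ne').congr_deriv ?_
    have hr0 : r ≠ 0 := (h0.trans_le hr.1).ne'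
    simp only [quadrinomial]
    field_simp
    ring
  · exact div_nonpos_of_nonpos_of_nonneg (by nlinarith [hr.1, hr.2]) (by positivity)
  · rw [radialProfile_one]
    field_simp
    ring
  · rw [radialProfile_one]
    field_simp
    ring

lemma sinh_div_self_lt_sinh_div_self {x y : ℝ} (hx : 0 < x) (hxy : x < y) :
    sinh x / x < sinh y / y := by
  have hconv : StrictConvexOn ℝ (Ici 0) sinh := by
    refine strictConvexOn_of_deriv2_pos (convex_Ici 0) continuous_sinh.continuousOn
      fun z hz => ?_
    rw [interior_Ici] at hz
    simpa [Real.deriv_sinh, Real.deriv_cosh] using hz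
  simpa using hconv.secant_strict_mono self_mem_Ici hx.le (hx.trans hxy).le hx.ne'
    (hx.trans hxy).ne' hxy

lemma pow_sub_inv_pow_eq_two_mul_sinh {y : ℝ} (hy : 0 < y) (k : ℕ) :
    y ^ k - (y ^ k)⁻¹ = 2 * sinh (k * log y) := by
  rw [sinh_eq, ← exp_log hy, ← exp_nat_mul, log_exp, exp_neg]
  ring

lemma mul_pow_two_sub_inv_lt {y : ℝ} (hy : 1 < y) {k : ℕ} (hk : 2 < k) :
    k * (y ^ 2 - (y ^ 2)⁻¹) < 2 * (y ^ k - (y ^ k)⁻¹) := by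
  have hy0 : 0 < y := one_pos.trans hy
  have ht : 0 < log y := log_pos hy
  have hk' : (2 : ℝ) < k := by exact_mod_cast hk
  rw [pow_sub_inv_pow_eq_two_mul_sinh hy0, pow_sub_inv_pow_eq_two_mul_sinh hy0]
  have := sinh_div_self_lt_sinh_div_self (by positivity : 0 < 2 * log y)
    (mul_lt_mul_of_pos_right hk' ht)
  rw [div_lt_div_iff₀ (by positivity) (by positivity)] at this
  push_cast
  nlinarith

-- Cramer's rule for `z a = 1`, `z b = -1`, `z' a = z' b = 0` with `z = radialProfile N c₀ c₁ c₂ c₃`,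
-- where `u`, `v` stand for `a ^ N`, `b ^ N`, which makes the system polynomial.
def boundaryDet (N a b u v : ℝ) : ℝ :=
  4 * a ^ 2 * b ^ 2 * (u - v) ^ 2 - N ^ 2 * u * v * (b ^ 2 - a ^ 2) ^ 2

noncomputable def boundaryCoeff0 (N a b u v : ℝ) : ℝ :=
  ((N - 1) * (N - 2) * b ^ 3 * u * v - 2 * b ^ 3 * u ^ 2 + N * (N - 3) * a * b ^ 2 * u * v
    - N * (N - 3) * a ^ 2 * b * u * v + 2 * a ^ 3 * v ^ 2 - (N - 1) * (N - 2) * a ^ 3 * u * v)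
    / (a * b * boundaryDet N a b u v)

noncomputable def boundaryCoeff1 (N a b u v : ℝ) : ℝ :=
  ((2 * N - 2) * b ^ 3 * u * v ^ 2 + (N + 2) * b ^ 3 * u ^ 2 * v + 3 * N * a * b ^ 2 * u * v ^ 2
    - 3 * N * a ^ 2 * b * u ^ 2 * v - (N + 2) * a ^ 3 * u * v ^ 2 - (2 * N - 2) * a ^ 3 * u ^ 2 * v)
    / (a * b * boundaryDet N a b u v)

noncomputable def boundaryCoeff2 (N a b u v : ℝ) : ℝ :=
  (-(N * (N - 1)) * b ^ 5 * u * v + (N ^ 2 - N - 6) * a ^ 2 * b ^ 3 * u * v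
    + 6 * a ^ 2 * b ^ 3 * u ^ 2 - 6 * a ^ 3 * b ^ 2 * v ^ 2
    - (N ^ 2 - N - 6) * a ^ 3 * b ^ 2 * u * v + N * (N - 1) * a ^ 5 * u * v)
    / (a * b * boundaryDet N a b u v)

noncomputable def boundaryCoeff3 (N a b u v : ℝ) : ℝ :=
  (-N * b ^ 5 * u ^ 2 * v + (6 - 2 * N) * a ^ 2 * b ^ 3 * u * v ^ 2
    + 3 * (N - 2) * a ^ 2 * b ^ 3 * u ^ 2 * v - 3 * (N - 2) * a ^ 3 * b ^ 2 * u * v ^ 2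
    + 2 * (N - 3) * a ^ 3 * b ^ 2 * u ^ 2 * v + N * a ^ 5 * u * v ^ 2)
    / (a * b * boundaryDet N a b u v)

lemma boundaryDet_pos {k : ℕ} (hk : 2 < k) {a b : ℝ} (ha : 0 < a) (hab : a < b) :
    0 < boundaryDet k a b (a ^ k) (b ^ k) := by
  -- write `b = a y ^ 2`; the determinant is then a positive multiple of
  -- `4 (y ^ k - y ^ (-k)) ^ 2 - k ^ 2 (y ^ 2 - y ^ (-2)) ^ 2`
  obtain ⟨y, hy, rfl⟩ : ∃ y, 1 < y ∧ b = a * y ^ 2 :=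
    ⟨√(b / a), lt_sqrt_of_sq_lt (by rw [one_pow]; exact (one_lt_div ha).2 hab),
      by rw [sq_sqrt (div_pos (ha.trans hab) ha).le]; field_simp⟩
  have hy0 : 0 < y := one_pos.trans hy
  have hlt := mul_pow_two_sub_inv_lt hy hk
  have hpos : 0 < (k : ℝ) * (y ^ 2 - (y ^ 2)⁻¹) := by
    have : 1 < y ^ 2 := one_lt_pow₀ hy two_ne_zero
    have : (y ^ 2)⁻¹ < 1 := inv_lt_one_of_one_lt₀ this
    have : (0 : ℝ) < k := by positivity
    nlinarith
  have key : boundaryDet k a (a * y ^ 2) (a ^ k) ((a * y ^ 2) ^ k)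
      = a ^ (2 * k + 4) * y ^ 4 * (y ^ k) ^ 2
        * ((2 * (y ^ k - (y ^ k)⁻¹)) ^ 2 - (k * (y ^ 2 - (y ^ 2)⁻¹)) ^ 2) := by
    simp only [boundaryDet]
    field_simp
    ring
  rw [key]
  have := pow_lt_pow_left₀ hlt hpos.le two_ne_zero
  have : 0 < a ^ (2 * k + 4) * y ^ 4 * (y ^ k) ^ 2 := by positivity
  nlinarith

lemma boundaryCoeff0_pos {k : ℕ} (hk : 3 ≤ k) {a b : ℝ} (ha : 0 < a) (hab : a < b) :
    0 < boundaryCoeff0 k a b (a ^ k) (b ^ k) := by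
  obtain ⟨m, rfl⟩ : ∃ m, k = m + 3 := ⟨k - 3, by omega⟩
  have hb : 0 < b := ha.trans hab
  refine div_pos ?_ (mul_pos (mul_pos ha hb) (boundaryDet_pos (by omega) ha hab))
  have h3 : 0 < b ^ 3 - a ^ 3 := sub_pos.2 (pow_lt_pow_left₀ hab ha.le (by norm_num))
  have h2m3 : 0 < b ^ (2 * m + 3) - a ^ (2 * m + 3) :=
    sub_pos.2 (pow_lt_pow_left₀ hab ha.le (by omega))
  have hba : 0 ≤ b - a := sub_nonneg.2 hab.le
  calc (0 : ℝ)
      < (m + 2) * (m + 1) * (a ^ (m + 3) * b ^ (m + 3)) * (b ^ 3 - a ^ 3)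
        + (m + 3) * m * (a ^ (m + 3) * b ^ (m + 3)) * (a * b) * (b - a)
        + 2 * (a ^ 3 * b ^ 3) * (b ^ (2 * m + 3) - a ^ (2 * m + 3)) := by positivity
    _ = _ := by push_cast; ring

lemma boundaryCoeff3_numerator_factor_neg (m : ℕ) {q : ℝ} (hq : 1 < q) :
    -2 * m * q ^ (m + 4) - 3 * (m + 1) * q ^ (m + 3) + (m + 3) * q ^ (m + 1)
      - (m + 3) * q ^ 3 + 3 * (m + 1) * q + 2 * m < 0 := by
  set χ : ℝ → ℝ := fun x => -2 * m * x ^ (m + 4) - 3 * (m + 1) * x ^ (m + 3)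
    + (m + 3) * x ^ (m + 1) - (m + 3) * x ^ 3 + 3 * (m + 1) * x + 2 * m
  have hχ : ∀ x, HasDerivAt χ (-2 * m * (m + 4) * x ^ (m + 3)
      + (m + 1) * (m + 3) * x ^ m * (1 - 3 * x ^ 2) + 3 * ((m + 1) - (m + 3) * x ^ 2)) x := by
    intro x
    have := ((((((hasDerivAt_pow (m + 4) x).const_mul (-2 * m : ℝ)).sub
      ((hasDerivAt_pow (m + 3) x).const_mul (3 * (m + 1) : ℝ))).add
      ((hasDerivAt_pow (m + 1) x).const_mul (m + 3 : ℝ))).sub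
      ((hasDerivAt_pow 3 x).const_mul (m + 3 : ℝ))).add
      ((hasDerivAt_id x).const_mul (3 * (m + 1) : ℝ))).add_const (2 * m : ℝ)
    refine this.congr_deriv ?_
    simp only [Nat.add_sub_cancel]
    push_cast
    ring
  have hanti : StrictAntiOn χ (Ici 1) := by
    refine strictAntiOn_of_hasDerivWithinAt_neg (convex_Ici 1)
      (fun x _ => (hχ x).continuousAt.continuousWithinAt)
      (fun x _ => (hχ x).hasDerivWithinAt) ?_
    intro x hx
    rw [interior_Ici] at hx
    have hx0 : 0 < x := one_pos.trans hx
    have hx2 : 1 < x ^ 2 := one_lt_pow₀ hx two_ne_zero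
    have : 0 ≤ (m : ℝ) * (m + 4) * x ^ (m + 3) := by positivity
    have : 0 < (m + 1) * (m + 3) * x ^ m := by positivity
    nlinarith
  simpa [χ] using hanti self_mem_Ici hq.le hq

lemma boundaryCoeff3_neg {k : ℕ} (hk : 3 ≤ k) {a b : ℝ} (ha : 0 < a) (hab : a < b) :
    boundaryCoeff3 k a b (a ^ k) (b ^ k) < 0 := by
  obtain ⟨m, rfl⟩ : ∃ m, k = m + 3 := ⟨k - 3, by omega⟩
  have hb : 0 < b := ha.trans hab
  refine div_neg_of_neg_of_pos ?_ (mul_pos (mul_pos ha hb) (boundaryDet_pos (by omega) ha hab))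
  obtain ⟨q, hq, rfl⟩ : ∃ q, 1 < q ∧ b = a * q := ⟨b / a, (one_lt_div ha).2 hab, by field_simp⟩
  have key := mul_neg_of_pos_of_neg
    (by positivity : 0 < a ^ (m + 6) * (a * q) ^ 2 * a ^ (m + 3) * (a * q) ^ (m + 3))
    (boundaryCoeff3_numerator_factor_neg m hq)
  convert key using 1
  push_cast
  ring

lemma exists_isCalibrationProfile_of_three_le {n : ℕ} (hn : 3 ≤ n) {R0 R1 : ℝ} (h0 : 0 < R0)
    (h01 : R0 < R1) :
    ∃ c0 c1 c2 c3, IsCalibrationProfile R0 R1 (radialProfile n c0 c1 c2 c3) := by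
  have h1 : 0 < R1 := h0.trans h01
  have hP : boundaryDet n R0 R1 (R0 ^ n) (R1 ^ n) ≠ 0 := (boundaryDet_pos (by omega) h0 h01).ne'
  refine ⟨_, boundaryCoeff1 n R0 R1 (R0 ^ n) (R1 ^ n), boundaryCoeff2 n R0 R1 (R0 ^ n) (R1 ^ n),
    _, isCalibrationProfile_radialProfile (by omega) (boundaryCoeff0_pos hn h0 h01)
      (boundaryCoeff3_neg hn h0 h01) h0 h01 ?_ ?_ ?_ ?_⟩
  on_goal 1 =>
    rw [← mul_left_inj' (pow_ne_zero n h0.ne'), radialProfile_mul_pow n _ _ _ _ h0.ne', one_mul]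
  on_goal 2 =>
    rw [← mul_left_inj' (pow_ne_zero n h1.ne'), radialProfile_mul_pow n _ _ _ _ h1.ne',
      neg_one_mul]
  all_goals
    simp only [quadrinomial, pow_add, boundaryCoeff0, boundaryCoeff1, boundaryCoeff2,
      boundaryCoeff3]
    field_simp
    simp only [boundaryDet]
    ring

/-- For `n ≠ 2`, every annulus with constant signature is calibrable: there is a radial
profile `z(r) = c₀ r³ + c₁ r^{3−n} + c₂ r + c₃ r^{1−n}` with `z(R₀) = 1`, `z(R₁) = −1`,
`z′(R₀) = z′(R₁) = 0` and `|z| ≤ 1` on `[R₀, R₁]`. -/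
theorem stmt_8 (n : ℕ) (hn : 1 ≤ n) (hn2 : n ≠ 2) (R0 R1 : ℝ)
    (h0 : 0 < R0) (h01 : R0 < R1) :
    ∃ c0 c1 c2 c3 : ℝ, ∃ z : ℝ → ℝ,
      z = (fun r => c0 * r ^ 3 + c1 * r ^ ((3 : ℤ) - (n : ℤ)) + c2 * r
        + c3 * r ^ ((1 : ℤ) - (n : ℤ))) ∧
      z R0 = 1 ∧ z R1 = -1 ∧ deriv z R0 = 0 ∧ deriv z R1 = 0 ∧
      ∀ r ∈ Set.Icc R0 R1, |z r| ≤ 1 := by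
  obtain ⟨c0, c1, c2, c3, hz⟩ :
      ∃ c0 c1 c2 c3, IsCalibrationProfile R0 R1 (radialProfile n c0 c1 c2 c3) := by
    rcases (by omega : n = 1 ∨ 3 ≤ n) with rfl | h3
    · exact exists_isCalibrationProfile_one h0 h01
    · exact exists_isCalibrationProfile_of_three_le h3 h0 h01
  exact ⟨c0, c1, c2, c3, _, rfl, hz⟩
end

section
/- Let n ≥ 1 be an integer with n ≠ 2, and let 0 < R₀ < R₁. Then there exist c₀, c₁, c₂, c₃ ∈ ℝ such that the function z(r) = c₀ r³ + c₁ r^{3−n} + c₂ r + c₃ r^{1−n} satisfies z(R₀) = −1, z(R₁) = −1, z′(R₀) = 0, z′(R₁) = 0, and |z(r)| ≤ 1 for all r ∈ [R₀, R₁]. (This shows that for n ≠ 2 every annulus A_{R₀}^{R₁} with non-constant signature is calibrable via the radial field Z(x) = z(|x|)x/|x|.) -/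
/-!
Write `g(r) = r^(n-1) (z(r) + 1) = c₀ r^(n+2) + c₂ r^n + r^(n-1) + c₁ r² + c₃`, a polynomial with
five monomials when `n ≥ 4` (for `n = 1, 3` the constant `z = -1` is admissible). The boundary
conditions say that `g` has double roots at `R₀` and `R₁`. By Descartes' rule of signs a
polynomial with `k` monomials has at most `k - 1` positive roots, so the four linear conditions
on `(c₀, c₁, c₂, c₃)` have no nontrivial homogeneous solution and are therefore solvable; and the
four positive roots of `g` force its coefficients to alternate in sign: `c₀ > 0`, `c₂ < 0`, `c₁ < 0`, `c₃ > 0`. Consequently `g = (X-R₀)²(X-R₁)² h`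
with `h` free of positive roots and `h(0) > 0`, so `g ≥ 0`, i.e. `z ≥ -1`; and
`g - r^(n-1)` has only two sign changes while it is positive at `0` and negative at `R₀, R₁`,
so it cannot become positive in between, i.e. `z ≤ 0`.
-/

open Polynomial

theorem sign_eq_neg_sign_iff_mul_neg {R : Type*} [Ring R] [LinearOrder R] [IsStrictOrderedRing R]
    {a b : R} (ha : a ≠ 0) : SignType.sign a = -SignType.sign b ↔ a * b < 0 := by
  rcases ha.lt_or_gt with ha | ha <;> rcases lt_trichotomy b 0 with hb | hb | hb <;>
    simp [ha, hb, ha.le, hb.le, mul_neg_iff, sign_neg, sign_pos]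

namespace Polynomial

section Semiring

variable {R : Type*} [Semiring R]

theorem leadingCoeff_C_mul_X_pow_add {a : R} {k : ℕ} {Q : R[X]} (ha : a ≠ 0)
    (hQ : Q.degree < k) : (C a * X ^ k + Q).leadingCoeff = a := by
  rw [leadingCoeff_add_of_degree_lt' (by rwa [degree_C_mul_X_pow k ha]),
    leadingCoeff_C_mul_X_pow]

theorem degree_sum_C_mul_X_pow_lt {n k : ℕ} {e : Fin n → ℕ} (he : ∀ i, e i < k) (c : Fin n → R) :
    (∑ i, C (c i) * X ^ e i).degree < (k : WithBot ℕ) :=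
  (degree_sum_le _ _).trans_lt <| (Finset.sup_lt_iff (WithBot.bot_lt_coe k)).2 fun i _ =>
    (degree_C_mul_X_pow_le _ _).trans_lt (WithBot.coe_lt_coe.2 (he i))

end Semiring

section OrderedRing

variable {R : Type*} [Ring R] [LinearOrder R] [IsStrictOrderedRing R]

theorem signVariations_C_mul_X_pow_add {a : R} {k : ℕ} {Q : R[X]} (hQ : Q.degree < k) :
    signVariations (C a * X ^ k + Q) =
      signVariations Q + if a * Q.leadingCoeff < 0 then 1 else 0 := by
  rcases eq_or_ne a 0 with rfl | ha
  · simp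
  have hdeg : Q.degree < (C a * X ^ k).degree := by rwa [degree_C_mul_X_pow k ha]
  have hne : C a * X ^ k + Q ≠ 0 := fun h => ha <| by
    simpa [h] using (leadingCoeff_C_mul_X_pow_add ha hQ).symm
  rw [signVariations_eq_eraseLead_add_ite hne, eraseLead_add_of_degree_lt_left hdeg,
    eraseLead_C_mul_X_pow, zero_add, leadingCoeff_C_mul_X_pow_add ha hQ]
  simp only [sign_eq_neg_sign_iff_mul_neg ha]

variable {n : ℕ} {e : Fin (n + 1) → ℕ}

theorem signVariations_sum_C_mul_X_pow_le (he : StrictAnti e) (c : Fin (n + 1) → R) :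
    signVariations (∑ i, C (c i) * X ^ e i) ≤ n := by
  induction n with
  | zero => simp [C_mul_X_pow_eq_monomial]
  | succ n ih =>
    rw [Fin.sum_univ_succ, signVariations_C_mul_X_pow_add
      (degree_sum_C_mul_X_pow_lt (fun i => he (Fin.succ_pos i)) _)]
    have := ih (he.comp_strictMono Fin.strictMono_succ) (fun i => c i.succ)
    split_ifs <;> simp only [Function.comp_def] at this <;> omega

theorem mul_neg_of_signVariations_sum_C_mul_X_pow_eq (he : StrictAnti e) {c : Fin (n + 1) → R}
    (h : signVariations (∑ i, C (c i) * X ^ e i) = n) (i : Fin n) :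
    c i.castSucc * c i.succ < 0 := by
  induction n with
  | zero => exact i.elim0
  | succ n ih =>
    have he' : StrictAnti (fun i : Fin (n + 1) => e i.succ) :=
      he.comp_strictMono Fin.strictMono_succ
    rw [Fin.sum_univ_succ, signVariations_C_mul_X_pow_add
      (degree_sum_C_mul_X_pow_lt (fun i => he (Fin.succ_pos i)) _)] at h
    set T := ∑ i : Fin (n + 1), C (c i.succ) * X ^ e i.succ
    have hle : signVariations T ≤ n := signVariations_sum_C_mul_X_pow_le he' _
    have ⟨hT, hlead⟩ : signVariations T = n ∧ c 0 * T.leadingCoeff < 0 := by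
      split_ifs at h with hc
      exacts [⟨by omega, hc⟩, by omega]
    have ih' := ih he' hT
    induction i using Fin.cases with
    | zero =>
      have hT1 : T.leadingCoeff = c 1 := by
        cases n with
        | zero => simp [T]
        | succ n =>
          rw [show T = _ from Fin.sum_univ_succ _]
          exact leadingCoeff_C_mul_X_pow_add (left_ne_zero_of_mul (ih' 0).ne)
            (degree_sum_C_mul_X_pow_lt (fun i => he' (Fin.succ_pos i)) _)
      simpa [hT1] using hlead
    | succ j => simpa using ih' j

end OrderedRing

noncomputable def hermiteData (a b : ℝ) : ℝ[X] →ₗ[ℝ] (Fin 4 → ℝ) :=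
  LinearMap.pi ![leval a, leval a ∘ₗ derivative, leval b, leval b ∘ₗ derivative]

theorem hermiteData_eq_zero_iff {a b : ℝ} {P : ℝ[X]} :
    hermiteData a b P = 0 ↔
      P.IsRoot a ∧ P.derivative.IsRoot a ∧ P.IsRoot b ∧ P.derivative.IsRoot b := by
  simp [hermiteData, funext_iff, Fin.forall_fin_succ, IsRoot]

theorem sq_mul_sq_dvd_of_hermiteData_eq_zero {a b : ℝ} (hab : a ≠ b) {P : ℝ[X]}
    (hP : hermiteData a b P = 0) : (X - C a) ^ 2 * (X - C b) ^ 2 ∣ P := by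
  rcases eq_or_ne P 0 with rfl | hP0
  · exact dvd_zero _
  obtain ⟨ha, ha', hb, hb'⟩ := hermiteData_eq_zero_iff.1 hP
  have hsq : ∀ t, P.IsRoot t → P.derivative.IsRoot t → (X - C t) ^ 2 ∣ P := fun t h h' =>
    (le_rootMultiplicity_iff hP0).1 ((one_lt_rootMultiplicity_iff_isRoot hP0).2 ⟨h, h'⟩)
  exact ((pairwise_coprime_X_sub_C (s := id) Function.injective_id hab).pow).mul_dvd
    (hsq a ha ha') (hsq b hb hb')

theorem countP_pos_roots_sq_mul_sq_mul {a b : ℝ} (ha : 0 < a) (hb : 0 < b) {h : ℝ[X]}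
    (hh : h ≠ 0) :
    ((X - C a) ^ 2 * (X - C b) ^ 2 * h).roots.countP (0 < ·) = h.roots.countP (0 < ·) + 4 := by
  rw [roots_mul (by simp [hh, X_sub_C_ne_zero]), roots_mul (by simp [X_sub_C_ne_zero])]
  simp only [roots_pow, roots_X_sub_C, Multiset.countP_add, Multiset.countP_nsmul]
  rw [← Multiset.cons_zero, ← Multiset.cons_zero, Multiset.countP_cons_of_pos _ ha,
    Multiset.countP_cons_of_pos _ hb]
  simp only [Multiset.countP_zero]
  omega

theorem four_le_countP_pos_roots {a b : ℝ} (ha : 0 < a) (hab : a < b) {P : ℝ[X]} (hP0 : P ≠ 0)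
    (hP : hermiteData a b P = 0) : 4 ≤ P.roots.countP (0 < ·) := by
  obtain ⟨h, rfl⟩ := sq_mul_sq_dvd_of_hermiteData_eq_zero hab.ne hP
  rw [countP_pos_roots_sq_mul_sq_mul ha (ha.trans hab) (right_ne_zero_of_mul hP0)]
  omega

theorem exists_hermiteData_sum_C_mul_X_pow_eq {e : Fin 4 → ℕ} (he : StrictAnti e) {a b : ℝ}
    (ha : 0 < a) (hab : a < b) (v : Fin 4 → ℝ) :
    ∃ c : Fin 4 → ℝ, hermiteData a b (∑ i, C (c i) * X ^ e i) = v := by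
  let L := hermiteData a b ∘ₗ Fintype.linearCombination ℝ (fun i => (X : ℝ[X]) ^ e i)
  have hL : ∀ c, L c = hermiteData a b (∑ i, C (c i) * X ^ e i) := by
    simp [L, Fintype.linearCombination_apply, smul_eq_C_mul]
  have hinj : Function.Injective L := by
    rw [← LinearMap.ker_eq_bot, LinearMap.ker_eq_bot']
    intro c hc
    rw [hL] at hc
    have hP : ∑ i, C (c i) * X ^ e i = 0 := by
      by_contra hP0
      have h3 : (∑ i, C (c i) * X ^ e i).roots.countP (0 < ·) ≤ 3 := by
        convert (roots_countP_pos_le_signVariations _).trans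
          (signVariations_sum_C_mul_X_pow_le he c)
      have := four_le_countP_pos_roots ha hab hP0 hc
      omega
    funext j
    simpa [finsetSum_coeff, coeff_C_mul_X_pow, he.injective.eq_iff] using
      congrArg (coeff · (e j)) hP
  obtain ⟨c, hc⟩ := LinearMap.injective_iff_surjective.1 hinj v
  exact ⟨c, (hL c).symm.trans hc⟩

theorem eval_pos_of_forall_pos_not_isRoot {h : ℝ[X]} (h0 : 0 < h.eval 0)
    (hroots : ∀ t, 0 < t → ¬h.IsRoot t) {r : ℝ} (hr : 0 ≤ r) : 0 < h.eval r := by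
  by_contra! hneg
  obtain ⟨t, ht, hzero⟩ := intermediate_value_Icc' hr h.continuous.continuousOn ⟨hneg, h0.le⟩
  rcases ht.1.eq_or_lt with rfl | htpos
  · exact h0.ne' hzero
  · exact hroots t htpos hzero

theorem eval_nonneg_of_hermiteData_eq_zero {a b : ℝ} (ha : 0 < a) (hab : a < b) {P : ℝ[X]}
    (hP : hermiteData a b P = 0) (hroots : P.roots.countP (0 < ·) ≤ 4) (h0 : 0 < P.eval 0)
    {r : ℝ} (hr : 0 ≤ r) : 0 ≤ P.eval r := by
  obtain ⟨h, rfl⟩ := sq_mul_sq_dvd_of_hermiteData_eq_zero hab.ne hP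
  have hh : h ≠ 0 := by rintro rfl; simp at h0
  rw [countP_pos_roots_sq_mul_sq_mul ha (ha.trans hab) hh] at hroots
  have hcount : h.roots.countP (0 < ·) = 0 := by omega
  have hnoroot : ∀ t, 0 < t → ¬h.IsRoot t := fun t ht hroot =>
    Multiset.countP_eq_zero.1 hcount t ((mem_roots hh).2 hroot) ht
  simp only [eval_mul, eval_pow, eval_sub, eval_X, eval_C] at h0 ⊢
  have := eval_pos_of_forall_pos_not_isRoot (pos_of_mul_pos_right h0 (by positivity)) hnoroot hr
  positivity

theorem eval_nonpos_of_countP_pos_roots_le_two {P : ℝ[X]} (hroots : P.roots.countP (0 < ·) ≤ 2)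
    (h0 : 0 < P.eval 0) {a b : ℝ} (ha : 0 < a) (hPa : P.eval a < 0) (hPb : P.eval b < 0)
    {r : ℝ} (hr : r ∈ Set.Icc a b) : P.eval r ≤ 0 := by
  by_contra! hpos
  have hP0 : P ≠ 0 := by rintro rfl; simp at h0
  have har : a < r := hr.1.lt_of_ne (by rintro rfl; linarith)
  have hrb : r < b := hr.2.lt_of_ne (by rintro rfl; linarith)
  obtain ⟨x, hx, hPx⟩ := intermediate_value_Ioo' ha.le P.continuous.continuousOn ⟨hPa, h0⟩
  obtain ⟨y, hy, hPy⟩ := intermediate_value_Ioo har.le P.continuous.continuousOn ⟨hPa, hpos⟩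
  obtain ⟨z, hz, hPz⟩ := intermediate_value_Ioo' hrb.le P.continuous.continuousOn ⟨hPb, hpos⟩
  have hsub : x ::ₘ y ::ₘ z ::ₘ 0 ≤ P.roots := by
    rw [Multiset.le_iff_subset (by simp; grind)]
    simp [Multiset.cons_subset, mem_roots hP0, hPx, hPy, hPz]
  have := Multiset.countP_le_of_le (0 < ·) hsub
  simp only [Multiset.countP_cons, Multiset.countP_zero, hx.1, ha.trans hy.1,
    ha.trans (har.trans hz.1), if_true] at this
  omega

theorem hasDerivAt_eval_mul_zpow_of_isRoot {G : ℝ[X]} {a : ℝ} (m : ℤ) (ha : a ≠ 0)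
    (h : G.IsRoot a) (h' : G.derivative.IsRoot a) :
    HasDerivAt (fun r => G.eval r * r ^ m) 0 a := by
  simpa [h.eq_zero, h'.eq_zero] using (G.hasDerivAt a).fun_mul (hasDerivAt_zpow m a (Or.inl ha))

end Polynomial

/-- `r ^ (n - 1) * (z r + 1)` for the profile `z r = c₀ r³ + c₁ r^(3-n) + c₂ r + c₃ r^(1-n)`. -/
noncomputable def profilePoly (n : ℕ) (c0 c1 c2 c3 : ℝ) : ℝ[X] :=
  C c0 * X ^ (n + 2) + C c2 * X ^ n + C c1 * X ^ 2 + C c3 + X ^ (n - 1)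

section ProfilePoly

variable {n : ℕ} {c0 c1 c2 c3 : ℝ}

theorem profilePoly_eq_sum_add (n : ℕ) (c0 c1 c2 c3 : ℝ) :
    profilePoly n c0 c1 c2 c3 =
      ∑ i, C (![c0, c2, c1, c3] i) * X ^ ![n + 2, n, 2, 0] i + X ^ (n - 1) := by
  simp [profilePoly, Fin.sum_univ_four]

theorem profilePoly_eq_sum (n : ℕ) (c0 c1 c2 c3 : ℝ) :
    profilePoly n c0 c1 c2 c3 =
      ∑ i, C (![c0, c2, 1, c1, c3] i) * X ^ ![n + 2, n, n - 1, 2, 0] i := by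
  simp [profilePoly, Fin.sum_univ_five]
  ring

theorem strictAnti_profilePoly_exponents (hn : 3 < n) : StrictAnti ![n + 2, n, n - 1, 2, 0] := by
  simp [Fin.strictAnti_iff_succ_lt, Fin.forall_fin_succ]
  omega

theorem strictAnti_profilePoly_sub_exponents (hn : 2 < n) : StrictAnti ![n + 2, n, 2, 0] := by
  simp [Fin.strictAnti_iff_succ_lt, Fin.forall_fin_succ]
  omega

theorem eval_zero_profilePoly (hn : 1 < n) : (profilePoly n c0 c1 c2 c3).eval 0 = c3 := by
  simp [profilePoly, show n ≠ 0 by omega, show n - 1 ≠ 0 by omega]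

theorem signVariations_profilePoly (hn : 3 < n) {a b : ℝ} (ha : 0 < a) (hab : a < b)
    (hG : hermiteData a b (profilePoly n c0 c1 c2 c3) = 0) :
    signVariations (profilePoly n c0 c1 c2 c3) = 4 := by
  have hG0 : profilePoly n c0 c1 c2 c3 ≠ 0 := fun h => by
    simpa [profilePoly, coeff_X_pow, coeff_C, show n - 1 ≠ n + 2 by omega,
      show n - 1 ≠ n by omega, show n - 1 ≠ 2 by omega, show n - 1 ≠ 0 by omega]
      using congrArg (coeff · (n - 1)) h
  refine le_antisymm ?_ ?_
  · rw [profilePoly_eq_sum]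
    exact signVariations_sum_C_mul_X_pow_le (strictAnti_profilePoly_exponents hn) _
  · convert (four_le_countP_pos_roots ha hab hG0 hG).trans (roots_countP_pos_le_signVariations _)

theorem coeff_signs_of_signVariations_profilePoly (hn : 3 < n)
    (h : signVariations (profilePoly n c0 c1 c2 c3) = 4) : c2 < 0 ∧ c1 < 0 ∧ 0 < c3 := by
  rw [profilePoly_eq_sum] at h
  have halt :=
    mul_neg_of_signVariations_sum_C_mul_X_pow_eq (strictAnti_profilePoly_exponents hn) h
  have hc2 : c2 < 0 := by simpa using halt 1
  have hc1 : c1 < 0 := by simpa using halt 2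
  exact ⟨hc2, hc1, pos_of_mul_neg_right (by simpa using halt 3) hc1.le⟩

theorem eval_profilePoly_le_pow (hn : 3 < n) (hc2 : c2 < 0) (hc1 : c1 < 0) (hc3 : 0 < c3)
    {a b r : ℝ} (ha : 0 < a) (hGa : (profilePoly n c0 c1 c2 c3).IsRoot a)
    (hGb : (profilePoly n c0 c1 c2 c3).IsRoot b) (hr : r ∈ Set.Icc a b) :
    (profilePoly n c0 c1 c2 c3).eval r ≤ r ^ (n - 1) := by
  have he := strictAnti_profilePoly_sub_exponents (by omega : 2 < n)
  set Q := ∑ i, C (![c0, c2, c1, c3] i) * X ^ ![n + 2, n, 2, 0] i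
  have hGQ := profilePoly_eq_sum_add n c0 c1 c2 c3
  rw [hGQ] at hGa hGb ⊢
  -- a third sign change would need `c₂ c₁ < 0`
  have hsv : signVariations Q ≤ 2 := by
    have h3 : signVariations Q ≤ 3 := signVariations_sum_C_mul_X_pow_le he _
    have hne : signVariations Q ≠ 3 := fun h =>
      (mul_neg_of_signVariations_sum_C_mul_X_pow_eq he h 1).not_ge
        (by simpa using mul_nonneg_of_nonpos_of_nonpos hc2.le hc1.le)
    omega
  have hQ0 : Q.eval 0 = c3 := by simp [Q, Fin.sum_univ_four, show n ≠ 0 by omega]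
  have hQa : Q.eval a < 0 := by
    simp only [IsRoot, eval_add, eval_pow, eval_X] at hGa
    linarith [pow_pos ha (n - 1)]
  have hQb : Q.eval b < 0 := by
    simp only [IsRoot, eval_add, eval_pow, eval_X] at hGb
    linarith [pow_pos (ha.trans_le (hr.1.trans hr.2)) (n - 1)]
  have := eval_nonpos_of_countP_pos_roots_le_two
    (by convert (roots_countP_pos_le_signVariations Q).trans hsv) (hQ0 ▸ hc3) ha hQa hQb hr
  simp only [eval_add, eval_pow, eval_X]
  linarith

theorem exists_profilePoly_hermiteData_eq_zero_and_eval_mem_Icc (hn : 3 < n) {a b : ℝ}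
    (ha : 0 < a) (hab : a < b) :
    ∃ c0 c1 c2 c3 : ℝ, hermiteData a b (profilePoly n c0 c1 c2 c3) = 0 ∧
      ∀ r ∈ Set.Icc a b, (profilePoly n c0 c1 c2 c3).eval r ∈ Set.Icc 0 (r ^ (n - 1)) := by
  have he := strictAnti_profilePoly_sub_exponents (by omega : 2 < n)
  obtain ⟨c, hc⟩ :=
    exists_hermiteData_sum_C_mul_X_pow_eq he ha hab (-hermiteData a b (X ^ (n - 1)))
  have hc' : ![c 0, c 1, c 2, c 3] = c := by
    ext i
    fin_cases i <;> rfl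
  have hG : hermiteData a b (profilePoly n (c 0) (c 2) (c 1) (c 3)) = 0 := by
    rw [profilePoly_eq_sum_add, hc', map_add, hc, neg_add_cancel]
  have hsv := signVariations_profilePoly hn ha hab hG
  obtain ⟨hc1, hc2, hc3⟩ := coeff_signs_of_signVariations_profilePoly hn hsv
  obtain ⟨hGa, -, hGb, -⟩ := hermiteData_eq_zero_iff.1 hG
  refine ⟨c 0, c 2, c 1, c 3, hG, fun r hr =>
    ⟨?_, eval_profilePoly_le_pow hn hc1 hc2 hc3 ha hGa hGb hr⟩⟩
  refine eval_nonneg_of_hermiteData_eq_zero ha hab hG ?_ ?_ (ha.le.trans hr.1)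
  · convert (roots_countP_pos_le_signVariations _).trans hsv.le
  · rwa [eval_zero_profilePoly (by omega)]

end ProfilePoly

noncomputable def profile (n : ℕ) (c0 c1 c2 c3 r : ℝ) : ℝ :=
  c0 * r ^ 3 + c1 * r ^ ((3 : ℤ) - n) + c2 * r + c3 * r ^ ((1 : ℤ) - n)

section Profile

variable {n : ℕ} {c0 c1 c2 c3 : ℝ}

theorem profile_eq_eval_profilePoly (hn : 1 ≤ n) {r : ℝ} (hr : r ≠ 0) :
    profile n c0 c1 c2 c3 r = (profilePoly n c0 c1 c2 c3).eval r * r ^ ((1 : ℤ) - n) - 1 := by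
  have key : ∀ (k : ℕ) (j : ℤ), (k : ℤ) + 1 - n = j → r ^ k * r ^ ((1 : ℤ) - n) = r ^ j := by
    rintro k j rfl
    rw [← zpow_natCast, ← zpow_add₀ hr, add_sub_assoc]
  have h3 : r ^ (n + 2) * r ^ ((1 : ℤ) - n) = r ^ 3 := by
    simpa using key (n + 2) 3 (by push_cast; ring)
  have h2 : r ^ 2 * r ^ ((1 : ℤ) - n) = r ^ ((3 : ℤ) - n) := key 2 _ (by ring)
  have h1 : r ^ n * r ^ ((1 : ℤ) - n) = r := by simpa using key n 1 (by ring)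
  have h0 : r ^ (n - 1) * r ^ ((1 : ℤ) - n) = 1 := by
    simpa using key (n - 1) 0 (by push_cast [hn]; ring)
  simp only [profile, profilePoly, eval_add, eval_mul, eval_C, eval_pow, eval_X]
  linear_combination -c2 * h1 - c0 * h3 - c1 * h2 - h0

theorem profile_eq_neg_one_and_deriv_eq_zero (hn : 1 ≤ n) {a : ℝ} (ha : a ≠ 0)
    (h : (profilePoly n c0 c1 c2 c3).IsRoot a)
    (h' : (profilePoly n c0 c1 c2 c3).derivative.IsRoot a) :
    profile n c0 c1 c2 c3 a = -1 ∧ deriv (profile n c0 c1 c2 c3) a = 0 := by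
  have heq : profile n c0 c1 c2 c3 =ᶠ[nhds a]
      fun r => (profilePoly n c0 c1 c2 c3).eval r * r ^ ((1 : ℤ) - n) - 1 :=
    (eventually_ne_nhds ha).mono fun r hr => profile_eq_eval_profilePoly hn hr
  refine ⟨by simp [heq.eq_of_nhds, h.eq_zero], ?_⟩
  rw [heq.deriv_eq]
  exact ((hasDerivAt_eval_mul_zpow_of_isRoot _ ha h h').sub_const 1).deriv

theorem abs_profile_le_one (hn : 1 ≤ n) {r : ℝ} (hr : 0 < r)
    (h : (profilePoly n c0 c1 c2 c3).eval r ∈ Set.Icc 0 (r ^ (n - 1))) :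
    |profile n c0 c1 c2 c3 r| ≤ 1 := by
  have hinv : r ^ ((1 : ℤ) - n) = (r ^ (n - 1))⁻¹ := by
    rw [← zpow_natCast, ← zpow_neg, Nat.cast_sub hn]
    ring_nf
  have hpos : 0 < r ^ (n - 1) := pow_pos hr _
  have hle : (profilePoly n c0 c1 c2 c3).eval r * (r ^ (n - 1))⁻¹ ≤ 1 := by
    rw [← div_eq_mul_inv, div_le_one hpos]
    exact h.2
  rw [profile_eq_eval_profilePoly hn hr.ne', hinv, abs_le]
  constructor <;> nlinarith [mul_nonneg h.1 (inv_nonneg.2 hpos.le)]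

end Profile

/-- For `n ≠ 2`, every annulus with non-constant signature is calibrable: there is a radial
profile `z(r) = c₀ r³ + c₁ r^{3−n} + c₂ r + c₃ r^{1−n}` with `z(R₀) = −1`, `z(R₁) = −1`,
`z′(R₀) = z′(R₁) = 0` and `|z| ≤ 1` on `[R₀, R₁]`. -/
theorem stmt_9 (n : ℕ) (hn : 1 ≤ n) (hn2 : n ≠ 2) (R0 R1 : ℝ)
    (h0 : 0 < R0) (h01 : R0 < R1) :
    ∃ c0 c1 c2 c3 : ℝ, ∃ z : ℝ → ℝ,
      z = (fun r => c0 * r ^ 3 + c1 * r ^ ((3 : ℤ) - (n : ℤ)) + c2 * r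
        + c3 * r ^ ((1 : ℤ) - (n : ℤ))) ∧
      z R0 = -1 ∧ z R1 = -1 ∧ deriv z R0 = 0 ∧ deriv z R1 = 0 ∧
      ∀ r ∈ Set.Icc R0 R1, |z r| ≤ 1 := by
  rcases (by omega : n = 1 ∨ n = 3 ∨ 3 < n) with rfl | rfl | hn3
  · exact ⟨0, 0, 0, -1, _, rfl, by norm_num⟩
  · exact ⟨0, -1, 0, 0, _, rfl, by norm_num⟩
  obtain ⟨c0, c1, c2, c3, hdata, hbound⟩ :=
    exists_profilePoly_hermiteData_eq_zero_and_eval_mem_Icc hn3 h0 h01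
  obtain ⟨hR0, hR0', hR1, hR1'⟩ := hermiteData_eq_zero_iff.1 hdata
  obtain ⟨hz0, hd0⟩ := profile_eq_neg_one_and_deriv_eq_zero hn h0.ne' hR0 hR0'
  obtain ⟨hz1, hd1⟩ := profile_eq_neg_one_and_deriv_eq_zero hn (h0.trans h01).ne' hR1 hR1'
  exact ⟨c0, c1, c2, c3, profile n c0 c1 c2 c3, rfl, hz0, hz1, hd0, hd1,
    fun r hr => abs_profile_le_one hn (h0.trans_le hr.1) (hbound r hr)⟩
end

section
/- Let n ≥ 1 be an integer, T ∈ (0, ∞], and let a, R : [0, T) → ℝ be functions with R(t) > 0 and a(t) ≠ 0 for all t, such that for every t ∈ [0, T), a has derivative a′(t) = −n(n+2)/R(t)³ and R has derivative R′(t) = −n(n−4)/(R(t)² a(t)). Then a(t) R(t)³ = a(0) R(0)³ − n(4n−10) t for all t ∈ [0, T). -/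
open scoped ENNReal

/-! Along the system, `(a R³)' = a' R³ + 3 a R² R' = -n(n+2) - 3n(n-4) = -n(4n-10)` is constant,
and a function with constant derivative on the interval `[0, T)` is affine. -/

theorem Convex.eq_add_mul_sub_of_hasDerivWithinAt_const {s : Set ℝ} (hs : Convex ℝ s)
    {f : ℝ → ℝ} {c x y : ℝ} (hf : ∀ z ∈ s, HasDerivWithinAt f c s z) (hx : x ∈ s)
    (hy : y ∈ s) : f y = f x + c * (y - x) := by
  have hg : ∀ z ∈ s, HasDerivWithinAt (fun u => f u - c * u) 0 s z := fun z hz => by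
    simpa using (hf z hz).fun_sub ((hasDerivWithinAt_id z s).const_mul c)
  have hle := hs.norm_image_sub_le_of_norm_hasDerivWithin_le hg (C := 0) (by simp) hx hy
  rw [zero_mul, norm_le_zero_iff, sub_eq_zero] at hle
  linear_combination hle

theorem convex_setOf_nonneg_and_ofReal_lt (T : ℝ≥0∞) :
    Convex ℝ {t : ℝ | 0 ≤ t ∧ ENNReal.ofReal t < T} :=
  (convex_Ici 0).inter (IsLowerSet.ordConnected fun _ _ hts ht =>
    (ENNReal.ofReal_le_ofReal hts).trans_lt ht).convex

theorem HasDerivWithinAt.mul_pow_three_of_ode {a R : ℝ → ℝ} {s : Set ℝ} {t α β : ℝ}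
    (ha : HasDerivWithinAt a (-α / R t ^ 3) s t)
    (hR : HasDerivWithinAt R (-β / (R t ^ 2 * a t)) s t) (hR0 : R t ≠ 0) (ha0 : a t ≠ 0) :
    HasDerivWithinAt (fun u => a u * R u ^ 3) (-(α + 3 * β)) s t := by
  refine (ha.fun_mul (hR.fun_pow 3)).congr_deriv ?_
  simp only [Nat.cast_ofNat, Nat.add_one_sub_one]
  field_simp
  ring

theorem stmt_12_general (n : ℕ) (T : ℝ≥0∞)
    (D : Set ℝ) (hD : D = {t : ℝ | 0 ≤ t ∧ ENNReal.ofReal t < T})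
    (a R : ℝ → ℝ)
    (hRpos : ∀ t ∈ D, 0 < R t) (hane : ∀ t ∈ D, a t ≠ 0)
    (ha : ∀ t ∈ D, HasDerivWithinAt a (-((n : ℝ) * ((n : ℝ) + 2)) / R t ^ 3) D t)
    (hR : ∀ t ∈ D,
      HasDerivWithinAt R (-((n : ℝ) * ((n : ℝ) - 4)) / (R t ^ 2 * a t)) D t) :
    ∀ t ∈ D, a t * R t ^ 3 = a 0 * R 0 ^ 3 - (n : ℝ) * (4 * (n : ℝ) - 10) * t := by
  subst hD
  intro t ht
  have h0 : (0 : ℝ) ∈ {t : ℝ | 0 ≤ t ∧ ENNReal.ofReal t < T} :=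
    ⟨le_rfl, (ENNReal.ofReal_le_ofReal ht.1).trans_lt ht.2⟩
  rw [(convex_setOf_nonneg_and_ofReal_lt T).eq_add_mul_sub_of_hasDerivWithinAt_const
    (fun s hs => (ha s hs).mul_pow_three_of_ode (hR s hs) (hRpos s hs).ne' (hane s hs)) h0 ht]
  ring

/-- First integral of the ODE system for the evolution of `a(t) 1_{B_{R(t)}}` under the
fourth-order total variation flow: `a R³` is affine in time.
Here `T ∈ (0,∞]` is encoded as `T : ℝ≥0∞` with `0 < T`, and the domain `[0,T)` is
`D = {t : ℝ | 0 ≤ t ∧ ofReal t < T}`. -/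
theorem stmt_12 (n : ℕ) (hn : 1 ≤ n) (T : ℝ≥0∞) (hT : 0 < T)
    (D : Set ℝ) (hD : D = {t : ℝ | 0 ≤ t ∧ ENNReal.ofReal t < T})
    (a R : ℝ → ℝ)
    (hRpos : ∀ t ∈ D, 0 < R t) (hane : ∀ t ∈ D, a t ≠ 0)
    (ha : ∀ t ∈ D, HasDerivWithinAt a (-((n : ℝ) * ((n : ℝ) + 2)) / R t ^ 3) D t)
    (hR : ∀ t ∈ D,
      HasDerivWithinAt R (-((n : ℝ) * ((n : ℝ) - 4)) / (R t ^ 2 * a t)) D t) :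
    ∀ t ∈ D, a t * R t ^ 3 = a 0 * R 0 ^ 3 - (n : ℝ) * (4 * (n : ℝ) - 10) * t :=
  stmt_12_general n T D hD a R hRpos hane ha hR
end

section
/- Let n ≥ 3 be an integer and a₀, R₀ > 0, and set t* = a₀ R₀³/(n(4n−10)). Define, for t ∈ [0, t*), a(t) = a₀ (1 − n(4n−10) t/(a₀R₀³))^{(n+2)/(4n−10)} and R(t) = R₀ (1 − n(4n−10) t/(a₀R₀³))^{(n−4)/(4n−10)}. Then a(0) = a₀, R(0) = R₀, and for all t ∈ [0, t*): a′(t) = −n(n+2)/R(t)³ and R′(t) = −n(n−4)/(R(t)² a(t)). Moreover a is strictly decreasing with a(t) → 0 as t → t*⁻, and: if n = 3 then R is strictly increasing with R(t) → +∞ as t → t*⁻; if n = 4 then R(t) = R₀ for all t; if n ≥ 5 then R is strictly decreasing with R(t) → 0 as t → t*⁻. -/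
/-!
Both `a` and `R` are power profiles `C (1 - t / t*) ^ γ`, with exponents
`p = (n + 2) / (4n - 10)` and `q = (n - 4) / (4n - 10)`. Differentiating a profile lowers its
exponent by one, and the identities `p - 1 = -3q`, `q - 1 = -(2q + p)` turn the derivatives into
the two ODEs. Monotonicity and the limit at `t*` only depend on the sign of the exponent, which
for `R` is the sign of `n - 4`.
-/

open Real Filter Set Topology

section OneSubDiv

variable {T t : ℝ}

theorem one_sub_div_pos (hT : 0 < T) (ht : t < T) : 0 < 1 - t / T :=
  sub_pos.2 ((div_lt_one hT).2 ht)

theorem tendsto_one_sub_div (hT : 0 < T) :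
    Tendsto (fun t => 1 - t / T) (𝓝[<] T) (𝓝[>] 0) := by
  refine tendsto_nhdsWithin_iff.2 ⟨?_, ?_⟩
  · have h : Tendsto (fun t => 1 - t / T) (𝓝 T) (𝓝 (1 - T / T)) :=
      (continuous_const.sub (continuous_id.div_const T)).tendsto T
    rw [div_self hT.ne', sub_self] at h
    exact h.mono_left nhdsWithin_le_nhds
  · filter_upwards [self_mem_nhdsWithin] with t ht using one_sub_div_pos hT ht

end OneSubDiv

noncomputable def powerProfile (C T γ t : ℝ) : ℝ := C * (1 - t / T) ^ γ

namespace powerProfile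

variable {C T γ t : ℝ}

@[simp]
theorem apply_zero : powerProfile C T γ 0 = C := by
  simp [powerProfile]

theorem pow_natCast (hs : 0 ≤ 1 - t / T) (k : ℕ) :
    powerProfile C T γ t ^ k = C ^ k * (1 - t / T) ^ (γ * k) := by
  rw [powerProfile, mul_pow, rpow_mul hs, rpow_natCast]

theorem hasDerivAt (hs : 0 < 1 - t / T) :
    HasDerivAt (powerProfile C T γ) (-(C * γ / T) * (1 - t / T) ^ (γ - 1)) t := by
  have hbase : HasDerivAt (fun t => 1 - t / T) (-(1 / T)) t :=
    ((hasDerivAt_id t).div_const T).const_sub 1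
  exact ((hbase.rpow_const (Or.inl hs.ne')).const_mul C).congr_deriv (by ring)

theorem strictAntiOn (hC : 0 < C) (hT : 0 < T) (hγ : 0 < γ) :
    StrictAntiOn (powerProfile C T γ) (Iio T) := fun s _ t ht hst =>
  mul_lt_mul_of_pos_left (rpow_lt_rpow (one_sub_div_pos hT ht).le
    (by gcongr) hγ) hC

theorem strictMonoOn (hC : 0 < C) (hT : 0 < T) (hγ : γ < 0) :
    StrictMonoOn (powerProfile C T γ) (Iio T) := fun s _ t ht hst =>
  mul_lt_mul_of_pos_left (rpow_lt_rpow_of_neg (one_sub_div_pos hT ht)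
    (by gcongr) hγ) hC

theorem tendsto_zero (hT : 0 < T) (hγ : 0 < γ) :
    Tendsto (powerProfile C T γ) (𝓝[<] T) (𝓝 0) := by
  have h := ((continuousAt_rpow_const 0 γ (Or.inr hγ.le)).tendsto.comp
    ((tendsto_one_sub_div hT).mono_right nhdsWithin_le_nhds)).const_mul C
  rwa [zero_rpow hγ.ne', mul_zero] at h

theorem tendsto_atTop (hC : 0 < C) (hT : 0 < T) (hγ : γ < 0) :
    Tendsto (powerProfile C T γ) (𝓝[<] T) atTop :=
  ((tendsto_rpow_neg_nhdsGT_zero hγ).comp (tendsto_one_sub_div hT)).const_mul_atTop hC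

end powerProfile

noncomputable def extinctionTime (n a0 R0 : ℝ) : ℝ := a0 * R0 ^ 3 / (n * (4 * n - 10))

section Solution

variable {n a0 R0 t : ℝ}

theorem hasDerivAt_amplitude (hn : n ≠ 0) (hd : 4 * n - 10 ≠ 0) (ha0 : a0 ≠ 0)
    (hR0 : R0 ≠ 0) (hs : 0 < 1 - t / extinctionTime n a0 R0) :
    HasDerivAt (powerProfile a0 (extinctionTime n a0 R0) ((n + 2) / (4 * n - 10)))
      (-(n * (n + 2)) / powerProfile R0 (extinctionTime n a0 R0) ((n - 4) / (4 * n - 10)) t ^ 3)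
      t := by
  refine (powerProfile.hasDerivAt hs).congr_deriv ?_
  -- `field_simp` normalizes the denominator `4 * n - 10` to `n * 4 - 10`
  have hd' : n * 4 - 10 ≠ 0 := by rwa [mul_comm]
  have hexp : (n + 2) / (4 * n - 10) - 1 = -((n - 4) / (4 * n - 10) * (3 : ℕ)) := by
    field_simp
    ring
  have hcoeff : a0 * ((n + 2) / (4 * n - 10)) / extinctionTime n a0 R0 = n * (n + 2) / R0 ^ 3 := by
    rw [extinctionTime]
    field_simp
  rw [powerProfile.pow_natCast hs.le, hexp, rpow_neg hs.le, hcoeff]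
  ring

theorem hasDerivAt_radius (hn : n ≠ 0) (hd : 4 * n - 10 ≠ 0) (ha0 : a0 ≠ 0)
    (hR0 : R0 ≠ 0) (hs : 0 < 1 - t / extinctionTime n a0 R0) :
    HasDerivAt (powerProfile R0 (extinctionTime n a0 R0) ((n - 4) / (4 * n - 10)))
      (-(n * (n - 4)) / (powerProfile R0 (extinctionTime n a0 R0) ((n - 4) / (4 * n - 10)) t ^ 2 *
        powerProfile a0 (extinctionTime n a0 R0) ((n + 2) / (4 * n - 10)) t)) t := by
  refine (powerProfile.hasDerivAt hs).congr_deriv ?_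
  have hd' : n * 4 - 10 ≠ 0 := by rwa [mul_comm]
  have hexp : (n - 4) / (4 * n - 10) - 1 =
      -((n - 4) / (4 * n - 10) * (2 : ℕ) + (n + 2) / (4 * n - 10)) := by
    field_simp
    ring
  have hcoeff : R0 * ((n - 4) / (4 * n - 10)) / extinctionTime n a0 R0 =
      n * (n - 4) / (R0 ^ 2 * a0) := by
    rw [extinctionTime]
    field_simp
  rw [powerProfile.pow_natCast hs.le, hexp, rpow_neg hs.le, rpow_add hs, hcoeff, powerProfile]
  ring

end Solution

/-- Explicit solution of the fourth-order total variation flow emanating from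
`a₀ 1_{B_{R₀}}` in dimension `n ≥ 3`: formulas, ODEs, monotonicity and behavior at the
extinction time `t* = a₀R₀³/(n(4n−10))`. Here `x ^ y` with real exponent is `Real.rpow`. -/
theorem stmt_13 (n : ℕ) (hn : 3 ≤ n) (a0 R0 : ℝ) (ha0 : 0 < a0) (hR0 : 0 < R0)
    (tstar : ℝ) (htstar : tstar = a0 * R0 ^ 3 / ((n : ℝ) * (4 * (n : ℝ) - 10)))
    (a R : ℝ → ℝ)
    (ha : a = fun t => a0 * (1 - (n : ℝ) * (4 * (n : ℝ) - 10) * t / (a0 * R0 ^ 3))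
      ^ (((n : ℝ) + 2) / (4 * (n : ℝ) - 10)))
    (hR : R = fun t => R0 * (1 - (n : ℝ) * (4 * (n : ℝ) - 10) * t / (a0 * R0 ^ 3))
      ^ (((n : ℝ) - 4) / (4 * (n : ℝ) - 10))) :
    a 0 = a0 ∧ R 0 = R0 ∧
    (∀ t ∈ Set.Ico (0 : ℝ) tstar,
      HasDerivAt a (-((n : ℝ) * ((n : ℝ) + 2)) / R t ^ 3) t ∧
      HasDerivAt R (-((n : ℝ) * ((n : ℝ) - 4)) / (R t ^ 2 * a t)) t) ∧
    StrictAntiOn a (Set.Ico 0 tstar) ∧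
    Filter.Tendsto a (nhdsWithin tstar (Set.Iio tstar)) (nhds 0) ∧
    (n = 3 → StrictMonoOn R (Set.Ico 0 tstar) ∧
      Filter.Tendsto R (nhdsWithin tstar (Set.Iio tstar)) Filter.atTop) ∧
    (n = 4 → ∀ t ∈ Set.Ico (0 : ℝ) tstar, R t = R0) ∧
    (5 ≤ n → StrictAntiOn R (Set.Ico 0 tstar) ∧
      Filter.Tendsto R (nhdsWithin tstar (Set.Iio tstar)) (nhds 0)) := by
  have hn' : (3 : ℝ) ≤ n := by exact_mod_cast hn
  have hd : (0 : ℝ) < 4 * n - 10 := by linarith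
  obtain rfl : tstar = extinctionTime n a0 R0 := htstar
  have hT : 0 < extinctionTime n a0 R0 := by unfold extinctionTime; positivity
  have hprofile (C γ : ℝ) :
      (fun t => C * (1 - (n : ℝ) * (4 * n - 10) * t / (a0 * R0 ^ 3)) ^ γ) =
        powerProfile C (extinctionTime n a0 R0) γ := by
    ext t
    rw [powerProfile, extinctionTime, div_div_eq_mul_div, mul_comm t]
  rw [hprofile] at ha hR
  subst ha hR
  have hs (t : ℝ) (ht : t ∈ Ico 0 (extinctionTime n a0 R0)) :
      0 < 1 - t / extinctionTime n a0 R0 :=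
    one_sub_div_pos hT ht.2
  have hp : (0 : ℝ) < (n + 2) / (4 * n - 10) := by positivity
  refine ⟨powerProfile.apply_zero, powerProfile.apply_zero,
    fun t ht => ⟨hasDerivAt_amplitude (by positivity) hd.ne' ha0.ne' hR0.ne' (hs t ht),
      hasDerivAt_radius (by positivity) hd.ne' ha0.ne' hR0.ne' (hs t ht)⟩,
    (powerProfile.strictAntiOn ha0 hT hp).mono Ico_subset_Iio_self,
    powerProfile.tendsto_zero hT hp, ?_, ?_, ?_⟩
  · rintro rfl
    have hq : ((3 : ℕ) - 4 : ℝ) / (4 * (3 : ℕ) - 10) < 0 := by norm_num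
    exact ⟨(powerProfile.strictMonoOn hR0 hT hq).mono Ico_subset_Iio_self,
      powerProfile.tendsto_atTop hR0 hT hq⟩
  · rintro rfl t -
    norm_num [powerProfile]
  · intro h5
    have hq : (0 : ℝ) < (n - 4) / (4 * n - 10) := by
      have : (5 : ℝ) ≤ n := by exact_mod_cast h5
      apply div_pos <;> linarith
    exact ⟨(powerProfile.strictAntiOn hR0 hT hq).mono Ico_subset_Iio_self,
      powerProfile.tendsto_zero hT hq⟩
end

section
/- Let a₀, R₀ > 0 and define, for t ∈ [0, ∞), a(t) = a₀ (1 + 6t/(a₀R₀³))^{−1/2} and R(t) = R₀ (1 + 6t/(a₀R₀³))^{1/2}. Then a(0) = a₀, R(0) = R₀, and for all t ≥ 0: a′(t) = −3/R(t)³ and R′(t) = 3/(R(t)² a(t)). Moreover a is strictly decreasing with a(t) → 0 as t → ∞, and R is strictly increasing with R(t) → +∞ as t → ∞. -/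
/-!
Both profiles are powers of the affine function `g t = 1 + 6t/(a₀R₀³)`, which is positive,
strictly increasing and unbounded on `[0, ∞)`: `a = a₀ g^{-1/2}` and `R = R₀ g^{1/2}`.
With `s = g^{1/2}` the chain rule gives `a' = -3/(R₀s)³` and `R' = 3/(a₀R₀²s) = 3/(R²a)`,
since `a₀R₀³ g' = 6`.
Monotonicity and the limits are those of `x ↦ x^{±1/2}` on `(0, ∞)`.
-/

open Real Filter Set Topology

section RpowComp

variable {s : Set ℝ} {g : ℝ → ℝ} {A p : ℝ}

theorem StrictMonoOn.const_mul_rpow (hg : StrictMonoOn g s) (hpos : ∀ t ∈ s, 0 < g t)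
    (hA : 0 < A) (hp : 0 < p) : StrictMonoOn (fun t => A * g t ^ p) s :=
  fun _ hx _ hy hxy => mul_lt_mul_of_pos_left (rpow_lt_rpow (hpos _ hx).le (hg hx hy hxy) hp) hA

theorem StrictMonoOn.const_mul_rpow_of_neg (hg : StrictMonoOn g s) (hpos : ∀ t ∈ s, 0 < g t)
    (hA : 0 < A) (hp : p < 0) : StrictAntiOn (fun t => A * g t ^ p) s :=
  fun _ hx _ hy hxy =>
    mul_lt_mul_of_pos_left (rpow_lt_rpow_of_neg (hpos _ hx) (hg hx hy hxy) hp) hA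

end RpowComp

theorem Real.rpow_neg_half_sub_one {x : ℝ} (hx : 0 ≤ x) :
    x ^ (-(1 / 2) - 1 : ℝ) = ((x ^ (1 / 2 : ℝ)) ^ 3)⁻¹ := by
  rw [← rpow_mul_natCast hx, ← rpow_neg hx]
  norm_num

theorem Real.rpow_half_sub_one {x : ℝ} (hx : 0 ≤ x) :
    x ^ (1 / 2 - 1 : ℝ) = (x ^ (1 / 2 : ℝ))⁻¹ := by
  rw [← rpow_neg hx]
  norm_num

noncomputable def scaleFactor (a0 R0 t : ℝ) : ℝ := 1 + 6 * t / (a0 * R0 ^ 3)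

section ScaleFactor

variable {a0 R0 : ℝ}

theorem scaleFactor_pos (ha0 : 0 < a0) (hR0 : 0 < R0) {t : ℝ} (ht : 0 ≤ t) :
    0 < scaleFactor a0 R0 t := by
  unfold scaleFactor
  positivity

theorem strictMono_scaleFactor (ha0 : 0 < a0) (hR0 : 0 < R0) : StrictMono (scaleFactor a0 R0) :=
  fun s t hst => by unfold scaleFactor; gcongr

theorem tendsto_scaleFactor_atTop (ha0 : 0 < a0) (hR0 : 0 < R0) :
    Tendsto (scaleFactor a0 R0) atTop atTop :=
  tendsto_atTop_add_const_left _ 1 <|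
    (tendsto_id.const_mul_atTop (by norm_num)).atTop_div_const (by positivity)

theorem hasDerivAt_scaleFactor (t : ℝ) :
    HasDerivAt (scaleFactor a0 R0) (6 / (a0 * R0 ^ 3)) t :=
  ((((hasDerivAt_id' t).const_mul 6).div_const _).const_add 1).congr_deriv (by ring)

theorem hasDerivAt_amplitude_s14 (ha0 : a0 ≠ 0) (hR0 : R0 ≠ 0) {t : ℝ}
    (hg : 0 < scaleFactor a0 R0 t) :
    HasDerivAt (fun t => a0 * scaleFactor a0 R0 t ^ (-(1 / 2) : ℝ))
      (-3 / (R0 * scaleFactor a0 R0 t ^ (1 / 2 : ℝ)) ^ 3) t := by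
  refine (((hasDerivAt_scaleFactor t).rpow_const (Or.inl hg.ne')).const_mul a0).congr_deriv ?_
  have hs : scaleFactor a0 R0 t ^ (1 / 2 : ℝ) ≠ 0 := (rpow_pos_of_pos hg _).ne'
  rw [rpow_neg_half_sub_one hg.le]
  field_simp
  ring

theorem hasDerivAt_radius_s14 (ha0 : a0 ≠ 0) (hR0 : R0 ≠ 0) {t : ℝ}
    (hg : 0 < scaleFactor a0 R0 t) :
    HasDerivAt (fun t => R0 * scaleFactor a0 R0 t ^ (1 / 2 : ℝ))
      (3 / ((R0 * scaleFactor a0 R0 t ^ (1 / 2 : ℝ)) ^ 2 *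
        (a0 * scaleFactor a0 R0 t ^ (-(1 / 2) : ℝ)))) t := by
  refine (((hasDerivAt_scaleFactor t).rpow_const (Or.inl hg.ne')).const_mul R0).congr_deriv ?_
  have hs : scaleFactor a0 R0 t ^ (1 / 2 : ℝ) ≠ 0 := (rpow_pos_of_pos hg _).ne'
  rw [rpow_half_sub_one hg.le, rpow_neg hg.le]
  field_simp
  ring

end ScaleFactor

/-- Explicit solution of the fourth-order total variation flow emanating from
`a₀ 1_{B_{R₀}}` in dimension `n = 1`: `a(t) = a₀(1+6t/(a₀R₀³))^{−1/2}`,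
`R(t) = R₀(1+6t/(a₀R₀³))^{1/2}`, their ODEs and asymptotic behavior.
Here `x ^ y` with real exponent is `Real.rpow`. -/
theorem stmt_14 (a0 R0 : ℝ) (ha0 : 0 < a0) (hR0 : 0 < R0)
    (a R : ℝ → ℝ)
    (ha : a = fun t => a0 * (1 + 6 * t / (a0 * R0 ^ 3)) ^ (-(1 / 2) : ℝ))
    (hR : R = fun t => R0 * (1 + 6 * t / (a0 * R0 ^ 3)) ^ ((1 / 2) : ℝ)) :
    a 0 = a0 ∧ R 0 = R0 ∧
    (∀ t : ℝ, 0 ≤ t →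
      HasDerivAt a (-3 / R t ^ 3) t ∧ HasDerivAt R (3 / (R t ^ 2 * a t)) t) ∧
    StrictAntiOn a (Set.Ici 0) ∧ Filter.Tendsto a Filter.atTop (nhds 0) ∧
    StrictMonoOn R (Set.Ici 0) ∧ Filter.Tendsto R Filter.atTop Filter.atTop := by
  obtain rfl : a = fun t => a0 * scaleFactor a0 R0 t ^ (-(1 / 2) : ℝ) := ha
  obtain rfl : R = fun t => R0 * scaleFactor a0 R0 t ^ (1 / 2 : ℝ) := hR
  have hpos : ∀ t ∈ Ici (0 : ℝ), 0 < scaleFactor a0 R0 t :=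
    fun _ ht => scaleFactor_pos ha0 hR0 ht
  have hmono := (strictMono_scaleFactor ha0 hR0).strictMonoOn (Ici 0)
  have htop := tendsto_scaleFactor_atTop ha0 hR0
  refine ⟨by simp [scaleFactor], by simp [scaleFactor], fun t ht => ⟨?_, ?_⟩,
    hmono.const_mul_rpow_of_neg hpos ha0 (by norm_num), ?_,
    hmono.const_mul_rpow hpos hR0 (by norm_num), ?_⟩
  · exact hasDerivAt_amplitude_s14 ha0.ne' hR0.ne' (hpos t ht)
  · exact hasDerivAt_radius_s14 ha0.ne' hR0.ne' (hpos t ht)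
  · simpa using
      ((tendsto_rpow_neg_atTop (by norm_num : (0 : ℝ) < 1 / 2)).comp htop).const_mul a0
  · exact ((tendsto_rpow_atTop (by norm_num)).comp htop).const_mul_atTop hR0
end

section
/- Let T ∈ (0, ∞], a₀, R₀ > 0, and let a, R : [0, T) → ℝ be functions with a(0) = a₀, R(0) = R₀, R(t) > 0 and a(t) R(t)³ ≠ t for all t ∈ [0, T), such that for every t ∈ [0, T), a has derivative a′(t) = −8/R(t)³ and R has derivative R′(t) = 3R(t)/(a(t)R(t)³ − t). Then a(t) R(t)³ = √(a₀² R₀⁶ + 9t²) + t for all t ∈ [0, T); in particular a(t) > t/R(t)³ for all t ∈ [0, T). -/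
open scoped ENNReal

/-!
Along the flow, `F = a R³ - t` satisfies `F F' = 9 t`, so `F² - 9 t²` is a first integral and
`F(t)² = a₀² R₀⁶ + 9 t²`. Since `F` never vanishes and `F(0) = a₀ R₀³ > 0`, continuity keeps `F`
positive, which selects the positive square root.
-/

theorem ordConnected_setOf_nonneg_ofReal_lt (T : ℝ≥0∞) :
    {t : ℝ | 0 ≤ t ∧ ENNReal.ofReal t < T}.OrdConnected :=
  ⟨fun _ hx _ hy _ hz => ⟨hx.1.trans hz.1, (ENNReal.ofReal_le_ofReal hz.2).trans_lt hy.2⟩⟩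

theorem hasDerivWithinAt_mul_pow_three_sub {a R : ℝ → ℝ} {D : Set ℝ} {t : ℝ}
    (ha : HasDerivWithinAt a (-8 / R t ^ 3) D t)
    (hR : HasDerivWithinAt R (3 * R t / (a t * R t ^ 3 - t)) D t)
    (hRt : R t ≠ 0) (hne : a t * R t ^ 3 - t ≠ 0) :
    HasDerivWithinAt (fun s => a s * R s ^ 3 - s) (9 * t / (a t * R t ^ 3 - t)) D t := by
  refine ((ha.fun_mul (hR.fun_pow 3)).fun_sub (hasDerivWithinAt_id t D)).congr_deriv ?_
  rw [eq_div_iff hne]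
  -- `(a R³ - t)' = -8 + 9 a R³ / (a R³ - t) - 1`, with the two quotients cancelled by hand
  linear_combination (-8 * (a t * R t ^ 3 - t)) * mul_inv_cancel₀ (pow_ne_zero 3 hRt) +
    9 * a t * R t ^ 3 * mul_inv_cancel₀ hne

theorem Convex.sq_sub_mul_sq_eq {D : Set ℝ} (hD : Convex ℝ D) {F : ℝ → ℝ} {c : ℝ}
    (hF : ∀ t ∈ D, HasDerivWithinAt F (c * t / F t) D t) (hF0 : ∀ t ∈ D, F t ≠ 0)
    {s t : ℝ} (hs : s ∈ D) (ht : t ∈ D) :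
    F t ^ 2 - c * t ^ 2 = F s ^ 2 - c * s ^ 2 := by
  have hG : ∀ x ∈ D, HasDerivWithinAt (fun x => F x ^ 2 - c * x ^ 2) 0 D x := by
    intro x hx
    refine (((hF x hx).fun_pow 2).fun_sub
      (((hasDerivWithinAt_id x D).fun_pow 2).const_mul c)).congr_deriv ?_
    simp only [id_eq]
    field_simp [hF0 x hx]
    ring
  have := hD.norm_image_sub_le_of_norm_hasDerivWithin_le hG (fun _ _ => norm_zero.le) hs ht
  rwa [zero_mul, norm_le_zero_iff, sub_eq_zero] at this

theorem IsPreconnected.pos_of_ne_zero {α : Type*} [TopologicalSpace α] {D : Set α}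
    (hD : IsPreconnected D) {F : α → ℝ} (hF : ContinuousOn F D) (hF0 : ∀ x ∈ D, F x ≠ 0)
    {x y : α} (hx : x ∈ D) (hpos : 0 < F x) (hy : y ∈ D) : 0 < F y := by
  by_contra! hneg
  obtain ⟨z, hz, hFz⟩ := hD.intermediate_value hy hx hF ⟨hneg, hpos.le⟩
  exact hF0 z hz hFz

theorem stmt_15_general (T : ℝ≥0∞) (a0 R0 : ℝ) (ha0 : 0 < a0)
    (D : Set ℝ) (hD : D = {t : ℝ | 0 ≤ t ∧ ENNReal.ofReal t < T})
    (a R : ℝ → ℝ) (hainit : a 0 = a0) (hRinit : R 0 = R0)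
    (hRpos : ∀ t ∈ D, 0 < R t) (hne : ∀ t ∈ D, a t * R t ^ 3 ≠ t)
    (ha : ∀ t ∈ D, HasDerivWithinAt a (-8 / R t ^ 3) D t)
    (hR : ∀ t ∈ D, HasDerivWithinAt R (3 * R t / (a t * R t ^ 3 - t)) D t) :
    ∀ t ∈ D, a t * R t ^ 3 = Real.sqrt (a0 ^ 2 * R0 ^ 6 + 9 * t ^ 2) + t ∧
      a t > t / R t ^ 3 := by
  intro t ht
  have hconn : D.OrdConnected := hD ▸ ordConnected_setOf_nonneg_ofReal_lt T
  have h0 : (0 : ℝ) ∈ D := by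
    subst hD
    exact ⟨le_rfl, (ENNReal.ofReal_le_ofReal ht.1).trans_lt ht.2⟩
  set F : ℝ → ℝ := fun s => a s * R s ^ 3 - s
  have hFne : ∀ s ∈ D, F s ≠ 0 := fun s hs => sub_ne_zero.2 (hne s hs)
  have hF' : ∀ s ∈ D, HasDerivWithinAt F (9 * s / F s) D s := fun s hs =>
    hasDerivWithinAt_mul_pow_three_sub (ha s hs) (hR s hs) (hRpos s hs).ne' (hFne s hs)
  have hF0 : F 0 = a0 * R0 ^ 3 := by simp [F, hainit, hRinit]
  have hF0_pos : 0 < F 0 := hF0 ▸ mul_pos ha0 (pow_pos (hRinit ▸ hRpos 0 h0) 3)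
  have hFt_pos : 0 < F t := hconn.isPreconnected.pos_of_ne_zero
    (fun s hs => (hF' s hs).continuousWithinAt) hFne h0 hF0_pos ht
  have hFt_sq : F t ^ 2 = a0 ^ 2 * R0 ^ 6 + 9 * t ^ 2 := by
    linear_combination hconn.convex.sq_sub_mul_sq_eq hF' hFne h0 ht + congrArg (· ^ 2) hF0
  have hFt : a t * R t ^ 3 = Real.sqrt (a0 ^ 2 * R0 ^ 6 + 9 * t ^ 2) + t := by
    rw [← hFt_sq, Real.sqrt_sq hFt_pos.le]
    ring
  refine ⟨hFt, ?_⟩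
  rw [gt_iff_lt, div_lt_iff₀ (pow_pos (hRpos t ht) 3)]
  linarith

/-- First integral of the ODE system for the evolution of the characteristic function of a
disk under the fourth-order total variation flow in dimension `n = 2`:
`a(t)R(t)³ = √(a₀²R₀⁶ + 9t²) + t`, and in particular `a(t) > t/R(t)³`.
Here `T ∈ (0,∞]` is encoded as `T : ℝ≥0∞` with `0 < T`, and the domain `[0,T)` is
`D = {t : ℝ | 0 ≤ t ∧ ofReal t < T}`. -/
theorem stmt_15 (T : ℝ≥0∞) (hT : 0 < T) (a0 R0 : ℝ) (ha0 : 0 < a0) (hR0 : 0 < R0)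
    (D : Set ℝ) (hD : D = {t : ℝ | 0 ≤ t ∧ ENNReal.ofReal t < T})
    (a R : ℝ → ℝ) (hainit : a 0 = a0) (hRinit : R 0 = R0)
    (hRpos : ∀ t ∈ D, 0 < R t) (hne : ∀ t ∈ D, a t * R t ^ 3 ≠ t)
    (ha : ∀ t ∈ D, HasDerivWithinAt a (-8 / R t ^ 3) D t)
    (hR : ∀ t ∈ D, HasDerivWithinAt R (3 * R t / (a t * R t ^ 3 - t)) D t) :
    ∀ t ∈ D, a t * R t ^ 3 = Real.sqrt (a0 ^ 2 * R0 ^ 6 + 9 * t ^ 2) + t ∧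
      a t > t / R t ^ 3 :=
  stmt_15_general T a0 R0 ha0 D hD a R hainit hRinit hRpos hne ha hR
end

section
/- Let a₀, R₀ > 0 and define, for t ∈ [0, ∞), A(t) = √(a₀² R₀⁶ + 9t²), R(t) = R₀ √(1 + 6t(3t + A(t))/(a₀² R₀⁶)), and a(t) = (A(t) + t)/R(t)³. Then a(0) = a₀, R(0) = R₀, and for all t ≥ 0: a′(t) = −8/R(t)³ and R′(t) = 3R(t)/(a(t)R(t)³ − t). Moreover R is strictly increasing with R(t) → +∞ as t → ∞, a is strictly decreasing with a(t) → 0 as t → ∞, and a(t) > t/R(t)³ for all t ≥ 0. -/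
/-!
With `A = √(a₀²R₀⁶ + 9t²)` one has `(A + 3t)² = a₀²R₀⁶ (1 + 6t(3t + A)/(a₀²R₀⁶))`, so the
radius is the rational expression `R = (A + 3t)/(a₀R₀²)`. Since `|3t| < A` and `A' = 9t/A`,
this gives `R' = 3R/A > 0`, and then `a = (A + t)/R³` satisfies `a' = -8/R³` and
`aR³ - t = A`. Finally `a₀R₀²R ≥ 6t` forces `R → ∞`, and `0 ≤ a ≤ a₀R₀²/R²` for `t ≥ 0`
forces `a → 0`.
-/

open Filter Topology Real

lemma abs_three_mul_lt_sqrt {C : ℝ} (hC : 0 < C) (t : ℝ) : |3 * t| < √(C + 9 * t ^ 2) :=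
  (lt_sqrt (abs_nonneg _)).2 (by rw [sq_abs]; linarith)

lemma hasDerivAt_sqrt_add_nine_mul_sq {C : ℝ} (hC : 0 < C) (t : ℝ) :
    HasDerivAt (fun t => √(C + 9 * t ^ 2)) (9 * t / √(C + 9 * t ^ 2)) t := by
  have hpos : 0 < C + 9 * t ^ 2 := by positivity
  have hinner : HasDerivAt (fun t : ℝ => C + 9 * t ^ 2) (18 * t) t := by
    simpa using
      (((hasDerivAt_id' t).fun_pow 2).const_mul (9 : ℝ)).const_add C |>.congr_deriv (by ring)
  refine (hinner.sqrt hpos.ne').congr_deriv ?_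
  have := sqrt_pos.2 hpos
  field_simp
  ring

lemma mul_mul_sqrt_one_add_eq {a₀ R₀ A t : ℝ} (ha₀ : 0 < a₀) (hR₀ : 0 < R₀)
    (hA : A ^ 2 = a₀ ^ 2 * R₀ ^ 6 + 9 * t ^ 2) (hA3 : 0 ≤ A + 3 * t) :
    a₀ * R₀ ^ 2 * (R₀ * √(1 + 6 * t * (3 * t + A) / (a₀ ^ 2 * R₀ ^ 6))) = A + 3 * t := by
  have hsq :
      1 + 6 * t * (3 * t + A) / (a₀ ^ 2 * R₀ ^ 6) = ((A + 3 * t) / (a₀ * R₀ ^ 3)) ^ 2 := by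
    field_simp
    linear_combination -hA
  rw [hsq, sqrt_sq (by positivity)]
  field_simp

section

variable {A R : ℝ → ℝ} {k t : ℝ}

lemma hasDerivAt_of_mul_eq_add (hk : k ≠ 0) (hRA : ∀ t, k * R t = A t + 3 * t)
    (hA' : HasDerivAt A (9 * t / A t) t) (hA0 : A t ≠ 0) :
    HasDerivAt R (3 * R t / A t) t := by
  have hR : R = fun t => (A t + 3 * t) / k := funext fun t => by rw [← hRA]; field_simp
  have := (hA'.fun_add ((hasDerivAt_id' t).const_mul 3)).div_const k
  rw [hR]
  refine this.congr_deriv ?_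
  field_simp
  ring

lemma hasDerivAt_add_div_pow_three (hA' : HasDerivAt A (9 * t / A t) t)
    (hR' : HasDerivAt R (3 * R t / A t) t) (hA0 : A t ≠ 0) (hR0 : R t ≠ 0) :
    HasDerivAt (fun t => (A t + t) / R t ^ 3) (-8 / R t ^ 3) t := by
  have := (hA'.fun_add (hasDerivAt_id' t)).fun_div (hR'.fun_pow 3) (pow_ne_zero 3 hR0)
  refine this.congr_deriv ?_
  field_simp
  ring

lemma tendsto_atTop_of_mul_eq_add (hk : 0 < k) (hRA : ∀ t, k * R t = A t + 3 * t)
    (hA : ∀ t, |3 * t| < A t) : Tendsto R atTop atTop := by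
  have hlin : Tendsto (fun t : ℝ => 6 / k * t) atTop atTop :=
    tendsto_id.const_mul_atTop (by positivity)
  refine tendsto_atTop_mono' atTop ?_ hlin
  filter_upwards [eventually_ge_atTop 0] with t ht
  rw [div_mul_eq_mul_div, div_le_iff₀' hk, hRA]
  linarith [le_abs_self (3 * t), hA t]

lemma tendsto_add_div_pow_three_zero (hk : 0 < k) (hRA : ∀ t, k * R t = A t + 3 * t)
    (hA : ∀ t, |3 * t| < A t) : Tendsto (fun t => (A t + t) / R t ^ 3) atTop (𝓝 0) := by
  have hR := tendsto_atTop_of_mul_eq_add hk hRA hA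
  have hbound : Tendsto (fun t => k / R t ^ 2) atTop (𝓝 0) :=
    tendsto_const_nhds.div_atTop ((tendsto_pow_atTop two_ne_zero).comp hR)
  refine tendsto_of_tendsto_of_tendsto_of_le_of_le' tendsto_const_nhds hbound ?_ ?_
  all_goals
    filter_upwards [eventually_ge_atTop 0, hR.eventually_gt_atTop 0] with t ht hRt
  · exact div_nonneg (by linarith [abs_nonneg (3 * t), hA t]) (by positivity)
  · calc (A t + t) / R t ^ 3 ≤ k * R t / R t ^ 3 := by gcongr; linarith [hRA t]
      _ = k / R t ^ 2 := by field_simp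

end

/-- Explicit solution of the ODE system describing the evolution
`u(t,x) = a(t) 1_{B_{R(t)}}(x) + (t/|x|³) 1_{ℝ²∖B_{R(t)}}(x)` of the fourth-order total
variation flow in dimension `n = 2` emanating from `a₀ 1_{B_{R₀}}`. -/
theorem stmt_16 (a0 R0 : ℝ) (ha0 : 0 < a0) (hR0 : 0 < R0)
    (A R a : ℝ → ℝ)
    (hA : A = fun t => Real.sqrt (a0 ^ 2 * R0 ^ 6 + 9 * t ^ 2))
    (hR : R = fun t => R0 * Real.sqrt (1 + 6 * t * (3 * t + A t) / (a0 ^ 2 * R0 ^ 6)))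
    (ha : a = fun t => (A t + t) / R t ^ 3) :
    a 0 = a0 ∧ R 0 = R0 ∧
    (∀ t : ℝ, 0 ≤ t →
      HasDerivAt a (-8 / R t ^ 3) t ∧
      HasDerivAt R (3 * R t / (a t * R t ^ 3 - t)) t) ∧
    StrictMonoOn R (Set.Ici 0) ∧ Filter.Tendsto R Filter.atTop Filter.atTop ∧
    StrictAntiOn a (Set.Ici 0) ∧ Filter.Tendsto a Filter.atTop (nhds 0) ∧
    ∀ t : ℝ, 0 ≤ t → a t > t / R t ^ 3 := by
  have hC : 0 < a0 ^ 2 * R0 ^ 6 := by positivity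
  have hk : 0 < a0 * R0 ^ 2 := by positivity
  have hAbs : ∀ t, |3 * t| < A t := hA ▸ abs_three_mul_lt_sqrt hC
  have hApos t : 0 < A t := (abs_nonneg _).trans_lt (hAbs t)
  have hA3 t : 0 < A t + 3 * t := by linarith [neg_abs_le (3 * t), hAbs t]
  have hA' : ∀ t, HasDerivAt A (9 * t / A t) t := hA ▸ hasDerivAt_sqrt_add_nine_mul_sq hC
  have hRA t : a0 * R0 ^ 2 * R t = A t + 3 * t := by
    rw [hR]
    exact mul_mul_sqrt_one_add_eq ha0 hR0 (by rw [hA]; exact sq_sqrt (by positivity)) (hA3 t).le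
  have hRpos t : 0 < R t := pos_of_mul_pos_right ((hRA t).trans_gt (hA3 t)) hk.le
  have hR' t : HasDerivAt R (3 * R t / A t) t :=
    hasDerivAt_of_mul_eq_add hk.ne' hRA (hA' t) (hApos t).ne'
  have ha' t : HasDerivAt a (-8 / R t ^ 3) t :=
    ha ▸ hasDerivAt_add_div_pow_three (hA' t) (hR' t) (hApos t).ne' (hRpos t).ne'
  have haR t : a t * R t ^ 3 - t = A t := by
    rw [ha]; field_simp [(hRpos t).ne']; ring
  have hA0 : A 0 = a0 * R0 ^ 3 := by
    rw [hA]; simp only; rw [← sqrt_sq (by positivity : 0 ≤ a0 * R0 ^ 3)]; ring_nf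
  have hR0' : R 0 = R0 := mul_left_cancel₀ hk.ne' (by rw [hRA, hA0]; ring)
  have hRmono : StrictMono R :=
    strictMono_of_hasDerivAt_pos hR' fun t => div_pos (mul_pos three_pos (hRpos t)) (hApos t)
  have haanti : StrictAnti a :=
    strictAnti_of_hasDerivAt_neg ha' fun t =>
      div_neg_of_neg_of_pos (by norm_num) (pow_pos (hRpos t) 3)
  refine ⟨?_, hR0', fun t _ => ⟨ha' t, haR t ▸ hR' t⟩, hRmono.strictMonoOn _,
    tendsto_atTop_of_mul_eq_add hk hRA hAbs, haanti.strictAntiOn _,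
    ha ▸ tendsto_add_div_pow_three_zero hk hRA hAbs, fun t _ => ?_⟩
  · rw [ha]; simp only; rw [hA0, hR0']; field_simp; ring
  · rw [ha]; exact div_lt_div_of_pos_right (by linarith [hApos t]) (pow_pos (hRpos t) 3)
end
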